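/- arXiv:2111.14801 — 14 statements merged into one kernel-verified Lean document; each statement's English description precedes it below -/
import Mathlib

section
/- Let p ≥ 1 and let F : [0, ∞) → [0, ∞) be differentiable with F(0) = 0. If the function t ↦ F(t)^{1/p} is concave on [0, ∞), then the function t ↦ F'(t)/t^{p-1} is non-increasing on (0, ∞). -/
/-!
Put `G = F ^ (1 / p)`, so that `F = G ^ p` and, wherever `F > 0`,
`F' t / t ^ (p - 1) = p * G' t * (G t / t) ^ (p - 1)`.
Since `G` is concave, `G'` is antitone; since `G` is moreover non-negative on `[0, ∞)`, `G' ≥ 0`;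
and since `G 0 = 0`, the chord slope `G t / t` is antitone and non-negative. A product of
non-negative antitone functions is antitone. The only other possibility is that `F` vanishes at
some `s > 0`, and then concavity and non-negativity force `F = 0` on `[0, ∞)`.
-/

open Set Filter

namespace ConcaveOn

variable {f : ℝ → ℝ} {a : ℝ}

lemma eqOn_zero_of_nonneg_of_eq_zero (hf : ConcaveOn ℝ (Ici a) f) (hf₀ : ∀ x ∈ Ici a, 0 ≤ f x)
    {s : ℝ} (has : a < s) (hs : f s = 0) : EqOn f 0 (Ici a) := by
  intro x (hx : a ≤ x)
  refine le_antisymm (?_ : f x ≤ 0) (hf₀ x hx)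
  rcases lt_trichotomy x s with hxs | rfl | hsx
  · have h := hf.slope_anti_adjacent hx (mem_Ici.2 (by linarith : a ≤ s + 1)) hxs (lt_add_one s)
    have h₁ : 0 ≤ (f (s + 1) - f s) / (s + 1 - s) := by
      rw [hs, add_sub_cancel_left, div_one, sub_zero]
      exact hf₀ _ (mem_Ici.2 (by linarith))
    have h₂ := (le_div_iff₀ (sub_pos.2 hxs)).1 (h₁.trans h)
    simpa only [hs, zero_mul, zero_sub, Left.nonneg_neg_iff] using h₂
  · exact hs.le
  · have h := hf.slope_anti_adjacent self_mem_Ici (mem_Ici.2 hx) has hsx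
    have h₁ : (f s - f a) / (s - a) ≤ 0 :=
      div_nonpos_of_nonpos_of_nonneg (by linarith [hf₀ a self_mem_Ici]) (by linarith)
    have h₂ := (div_le_iff₀ (sub_pos.2 hsx)).1 (h.trans h₁)
    simpa only [hs, zero_mul, sub_zero] using h₂

/-- Where `f` is not differentiable, `deriv f x = 0` and there is nothing to prove. -/
lemma deriv_nonneg_of_forall_le (hf : ConcaveOn ℝ (Ici a) f) {m : ℝ} (hm : ∀ y ∈ Ici a, m ≤ f y)
    {x : ℝ} (hx : a ≤ x) : 0 ≤ deriv f x := by
  by_cases hd : DifferentiableAt ℝ f x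
  swap
  · rw [deriv_zero_of_not_differentiableAt hd]
  by_contra! hneg
  -- the tangent line at `x`, which lies above `f`, drops below `m` at `x + h`
  set h := (f x - m) / -deriv f x + 1 with h_def
  have hh : 0 < h := by
    have : 0 ≤ (f x - m) / -deriv f x := div_nonneg (by linarith [hm x hx]) (by linarith)
    linarith
  have htangent := hf.slope_le_deriv hx (mem_Ici.2 (by linarith : a ≤ x + h))
    (lt_add_of_pos_right x hh) hd
  rw [slope_def_field, add_sub_cancel_left, div_le_iff₀ hh] at htangent
  have hlin : deriv f x * h = m - f x + deriv f x := by
    rw [h_def]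
    field_simp [hneg.ne]
    ring
  linarith [hm (x + h) (mem_Ici.2 (by linarith))]

lemma antitoneOn_div_self (hf : ConcaveOn ℝ (Ici 0) f) (hf0 : f 0 = 0) :
    AntitoneOn (fun x => f x / x) (Ioi 0) := by
  intro x (hx : 0 < x) y (hy : 0 < y) hxy
  simpa [slope_def_field, hf0] using
    hf.slope_anti self_mem_Ici ⟨mem_Ici.2 hx.le, hx.ne'⟩ ⟨mem_Ici.2 hy.le, hy.ne'⟩ hxy

lemma antitoneOn_deriv_mul_div_self_rpow (hf : ConcaveOn ℝ (Ici 0) f)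
    (hf₀ : ∀ x ∈ Ici 0, 0 ≤ f x) (hf0 : f 0 = 0) (hfd : ∀ x ∈ Ioi 0, DifferentiableAt ℝ f x)
    {q : ℝ} (hq : 0 ≤ q) : AntitoneOn (fun x => deriv f x * (f x / x) ^ q) (Ioi 0) := by
  intro s (hs : 0 < s) t (ht : 0 < t) hst
  have hderiv := (hf.subset Ioi_subset_Ici_self (convex_Ioi 0)).antitoneOn_deriv hfd hs ht hst
  have hslope := hf.antitoneOn_div_self hf0 hs ht hst
  have hderiv₀ : 0 ≤ deriv f s := hf.deriv_nonneg_of_forall_le hf₀ hs.le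
  have hslope₀ : 0 ≤ f t / t := div_nonneg (hf₀ t ht.le) ht.le
  exact mul_le_mul hderiv (Real.rpow_le_rpow hslope₀ hslope hq) (Real.rpow_nonneg hslope₀ _)
    hderiv₀

end ConcaveOn

/-- The chain rule for `F = (F ^ (1 / p)) ^ p`. -/
lemma mul_deriv_rpow_one_div_of_hasDerivAt {F : ℝ → ℝ} {F' p u : ℝ} (hp : p ≠ 0) (hFu : 0 < F u)
    (hF : HasDerivAt F F' u) :
    p * deriv (fun t => F t ^ (1 / p)) u * (F u ^ (1 / p)) ^ (p - 1) = F' := by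
  have hexp : 1 / p - 1 + 1 / p * (p - 1) = 0 := by field_simp; ring
  rw [(hF.rpow_const (Or.inl hFu.ne')).deriv, ← Real.rpow_mul hFu.le, mul_assoc p,
    mul_assoc (F' * (1 / p)), ← Real.rpow_add hFu, hexp, Real.rpow_zero]
  field_simp

/-- Let `p ≥ 1` and `F : [0,∞) → [0,∞)` be differentiable with `F 0 = 0`.
If `t ↦ F t ^ (1/p)` is concave on `[0,∞)`, then `t ↦ F' t / t ^ (p-1)` is
non-increasing on `(0,∞)`. -/
theorem stmt_0 (p : ℝ) (hp : 1 ≤ p) (F F' : ℝ → ℝ)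
    (hFnonneg : ∀ t ∈ Set.Ici (0:ℝ), 0 ≤ F t)
    (hF0 : F 0 = 0)
    (hFderiv : ∀ t ∈ Set.Ici (0:ℝ), HasDerivWithinAt F (F' t) (Set.Ici 0) t)
    (hconc : ConcaveOn ℝ (Set.Ici 0) (fun t => F t ^ (1 / p))) :
    AntitoneOn (fun t => F' t / t ^ (p - 1)) (Set.Ioi 0) := by
  set G : ℝ → ℝ := fun t => F t ^ (1 / p)
  have hp₀ : 0 < p := by linarith
  have hG₀ : ∀ t ∈ Ici (0:ℝ), 0 ≤ G t := fun t ht => Real.rpow_nonneg (hFnonneg t ht) _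
  have hFd : ∀ u ∈ Ioi (0:ℝ), HasDerivAt F (F' u) u := fun u (hu : 0 < u) =>
    (hFderiv u hu.le).hasDerivAt (Ici_mem_nhds hu)
  by_cases hpos : ∀ u ∈ Ioi (0:ℝ), 0 < F u
  · have hGd : ∀ u ∈ Ioi (0:ℝ), DifferentiableAt ℝ G u := fun u hu =>
      ((hFd u hu).rpow_const (Or.inl (hpos u hu).ne')).differentiableAt
    have hanti := hconc.antitoneOn_deriv_mul_div_self_rpow hG₀ (by simp [G, hF0, hp₀.ne']) hGd
      (sub_nonneg.2 hp)
    refine AntitoneOn.congr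
      (fun s hs t ht hst => mul_le_mul_of_nonneg_left (hanti hs ht hst) hp₀.le)
      fun u (hu : 0 < u) => ?_
    rw [← mul_deriv_rpow_one_div_of_hasDerivAt hp₀.ne' (hpos u hu) (hFd u hu)]
    simp only [G, Real.div_rpow (hG₀ u hu.le) hu.le]
    ring
  · push Not at hpos
    obtain ⟨s, hs : 0 < s, hFs⟩ := hpos
    have hGs : G s = 0 := by simp [G, le_antisymm hFs (hFnonneg s hs.le), hp₀.ne']
    have hF_eq : EqOn F 0 (Ici 0) := fun u hu =>
      (Real.rpow_eq_zero (hFnonneg u hu) (by positivity)).1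
        (hconc.eqOn_zero_of_nonneg_of_eq_zero hG₀ hs hGs hu)
    have hF' : EqOn F' 0 (Ioi 0) := fun u hu =>
      (hFd u hu).unique <| (hasDerivAt_const u 0).congr_of_eventuallyEq <|
        eventually_of_mem (Ici_mem_nhds hu) hF_eq
    intro s hs t ht _
    simp [hF' hs, hF' ht]
end

section
/- Let p ≥ 1 and let G : [0, ∞) → [0, ∞) be continuous on [0, ∞), differentiable on (0, ∞), concave, and satisfy G(0) = 0. Then the function H : [0, ∞) → [0, ∞) defined by H(s) = G(s^{1/p})^p is concave on [0, ∞). -/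
/-!
At a point `s > 0` put `t = s ^ (1 / p)`. The tangent line `v ↦ c v + d` of `G` at `t` lies above
`G` on `[0, ∞)`, and `G ≥ 0`, `G 0 = 0` force `c, d ≥ 0`. Hence `H` lies below
`u ↦ (c u ^ (1 / p) + d) ^ p`, with equality at `s`; this majorant is concave because its
derivative `c (c + d u ^ (-1 / p)) ^ (p - 1)` is antitone. A function that is touched from above
by a concave majorant at every point is concave.
-/

open Real Set

theorem ConcaveOn.le_add_mul_sub_of_hasDerivAt {S : Set ℝ} {f : ℝ → ℝ} {x y c : ℝ}
    (hf : ConcaveOn ℝ S f) (hx : x ∈ S) (hy : y ∈ S) (hc : HasDerivAt f c x) :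
    f y ≤ f x + c * (y - x) := by
  rcases lt_trichotomy y x with hyx | rfl | hxy
  · have h := hf.le_slope_of_hasDerivAt hy hx hyx hc
    rw [slope_def_field, le_div_iff₀ (by linarith)] at h
    linarith
  · simp
  · have h := hf.slope_le_of_hasDerivAt hx hy hxy hc
    rw [slope_def_field, div_le_iff₀ (by linarith)] at h
    linarith

theorem nonneg_of_forall_nonneg_add_mul {a c : ℝ} (h : ∀ u, 0 ≤ u → 0 ≤ a + c * u) : 0 ≤ c := by
  by_contra! hc
  have hu : 0 ≤ (|a| + 1) / -c := div_nonneg (by positivity) (by linarith)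
  have key : c * ((|a| + 1) / -c) = -(|a| + 1) := by
    rw [mul_div_assoc', div_neg, mul_div_cancel_left₀ _ hc.ne]
  linarith [h _ hu, key, le_abs_self a]

theorem concaveOn_mul_rpow_one_div_add_rpow {p c d : ℝ} (hp : 1 ≤ p) (hc : 0 ≤ c) (hd : 0 ≤ d) :
    ConcaveOn ℝ (Ici 0) (fun u : ℝ => (c * u ^ (1 / p) + d) ^ p) := by
  have hp0 : 0 < p := by linarith
  have hinv : 0 ≤ 1 / p := by positivity
  have hcont : ContinuousOn (fun u : ℝ => (c * u ^ (1 / p) + d) ^ p) (Ici 0) :=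
    (((continuousOn_id.rpow_const fun _ _ => Or.inr hinv).const_smul c).add
      continuousOn_const).rpow_const fun _ _ => Or.inr hp0.le
  have hderiv : ∀ t : ℝ, 0 < t → HasDerivAt (fun u : ℝ => (c * u ^ (1 / p) + d) ^ p)
      (c * (c + d * t ^ (-(1 / p))) ^ (p - 1)) t := by
    intro t ht
    have hinner : HasDerivAt (fun u : ℝ => c * u ^ (1 / p) + d)
        (c * (1 / p * t ^ (1 / p - 1))) t :=
      ((hasDerivAt_rpow_const (Or.inl ht.ne')).const_mul c).add_const d
    convert hinner.rpow_const (Or.inr hp) using 1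
    have hfactor : c + d * t ^ (-(1 / p)) = (c * t ^ (1 / p) + d) * t ^ (-(1 / p)) := by
      rw [add_mul, mul_assoc, ← rpow_add ht, add_neg_cancel, rpow_zero, mul_one]
    have hexp : (t ^ (-(1 / p))) ^ (p - 1) = t ^ (1 / p - 1) := by
      rw [← rpow_mul ht.le]
      congr 1
      field_simp
      ring
    rw [hfactor, mul_rpow (by positivity) (by positivity), hexp]
    field_simp
  refine AntitoneOn.concaveOn_of_deriv (convex_Ici 0) hcont ?_ ?_
  · rw [interior_Ici]
    exact fun t ht => (hderiv t ht).differentiableAt.differentiableWithinAt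
  · rw [interior_Ici]
    intro x (hx : 0 < x) y (hy : 0 < y) hxy
    rw [(hderiv x hx).deriv, (hderiv y hy).deriv]
    have hxy' : y ^ (-(1 / p)) ≤ x ^ (-(1 / p)) :=
      rpow_le_rpow_of_nonpos hx hxy (neg_nonpos.mpr hinv)
    gcongr

theorem concaveOn_Ici_of_forall_concave_majorant {H : ℝ → ℝ} (h0 : H 0 = 0)
    (hmaj : ∀ x, 0 < x → ∃ F : ℝ → ℝ, ConcaveOn ℝ (Ici 0) F ∧ (∀ y, 0 ≤ y → H y ≤ F y) ∧
      F x = H x) :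
    ConcaveOn ℝ (Ici 0) H := by
  refine ⟨convex_Ici 0, fun a ha b hb μ ν hμ hν hμν => ?_⟩
  simp only [smul_eq_mul, mem_Ici] at ha hb ⊢
  rcases (add_nonneg (mul_nonneg hμ ha) (mul_nonneg hν hb)).eq_or_lt with hx | hx
  · have hvanish : ∀ w z, w * z = 0 → w * H z = 0 := fun w z hwz => by
      rcases mul_eq_zero.mp hwz with rfl | rfl <;> simp [h0]
    rw [← hx, h0, hvanish μ a (by nlinarith [mul_nonneg hμ ha, mul_nonneg hν hb]),
      hvanish ν b (by nlinarith [mul_nonneg hμ ha, mul_nonneg hν hb]), add_zero]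
  · obtain ⟨F, hF, hHF, hFx⟩ := hmaj _ hx
    calc μ * H a + ν * H b ≤ μ * F a + ν * F b := by gcongr <;> exact hHF _ ‹_›
      _ ≤ F (μ * a + ν * b) := by simpa using hF.2 ha hb hμ hν hμν
      _ = H (μ * a + ν * b) := hFx

theorem stmt_1_general (p : ℝ) (hp : 1 ≤ p) (G : ℝ → ℝ)
    (hGnonneg : ∀ s ∈ Set.Ici (0:ℝ), 0 ≤ G s)
    (hGdiff : DifferentiableOn ℝ G (Set.Ioi 0))
    (hGconc : ConcaveOn ℝ (Set.Ici 0) G)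
    (hG0 : G 0 = 0) :
    ConcaveOn ℝ (Set.Ici 0) (fun s => G (s ^ (1 / p)) ^ p) := by
  have hp0 : 0 < p := by linarith
  have hH0 : G ((0 : ℝ) ^ (1 / p)) ^ p = 0 := by
    rw [zero_rpow (by positivity), hG0, zero_rpow hp0.ne']
  refine concaveOn_Ici_of_forall_concave_majorant hH0 fun s hs => ?_
  set t := s ^ (1 / p)
  have ht : 0 < t := rpow_pos_of_pos hs _
  set c := deriv G t
  have htangent : ∀ v, 0 ≤ v → G v ≤ c * v + (G t - c * t) := fun v hv => by
    have := hGconc.le_add_mul_sub_of_hasDerivAt ht.le hv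
      (hGdiff.differentiableAt (Ioi_mem_nhds ht)).hasDerivAt
    linarith
  have hd : 0 ≤ G t - c * t := by simpa [hG0] using htangent 0 le_rfl
  have hc : 0 ≤ c := nonneg_of_forall_nonneg_add_mul (a := G t - c * t) fun v hv => by
    linarith [htangent v hv, hGnonneg v hv]
  refine ⟨_, concaveOn_mul_rpow_one_div_add_rpow hp hc hd, fun u hu => ?_, ?_⟩
  · have hv : (0 : ℝ) ≤ u ^ (1 / p) := rpow_nonneg hu _
    exact rpow_le_rpow (hGnonneg _ hv) (htangent _ hv) hp0.le
  · show (c * t + (G t - c * t)) ^ p = G t ^ p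
    ring_nf

/-- Let `p ≥ 1` and `G : [0,∞) → [0,∞)` be continuous on `[0,∞)`,
differentiable on `(0,∞)`, concave, with `G 0 = 0`. Then
`H s = G (s ^ (1/p)) ^ p` is concave on `[0,∞)`. -/
theorem stmt_1 (p : ℝ) (hp : 1 ≤ p) (G : ℝ → ℝ)
    (hGnonneg : ∀ s ∈ Set.Ici (0:ℝ), 0 ≤ G s)
    (hGcont : ContinuousOn G (Set.Ici 0))
    (hGdiff : DifferentiableOn ℝ G (Set.Ioi 0))
    (hGconc : ConcaveOn ℝ (Set.Ici 0) G)
    (hG0 : G 0 = 0) :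
    ConcaveOn ℝ (Set.Ici 0) (fun s => G (s ^ (1 / p)) ^ p) :=
  stmt_1_general p hp G hGnonneg hGdiff hGconc hG0
end

section
/- Let F(t) = √(1+t) + t² for t ≥ 0. Then the function t ↦ F'(t)/t is non-increasing on (0, ∞), while the function t ↦ F(t)^{1/2} is convex on [0, ∞). (Hence the monotonicity of F'(t)/t^{p-1} for p = 2 does not imply concavity of F^{1/2}.) -/
/-!
`F'(t)/t = 1/(2t√(1+t)) + 2` is visibly decreasing. For a positive `F`, the second derivative of
`√F` is `(2FF'' - F'²)/(4F^{3/2})`, so `√F` is convex as soon as `F'² ≤ 2FF''`; with `u = √(1+t) ≥ 1`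
this inequality reduces to `6u⁴ + 12u² - 3u - 2 ≥ 0`.
-/

open Real Set

theorem convexOn_sqrt_of_sq_deriv_le {D : Set ℝ} (hD : Convex ℝ D) {F F' F'' : ℝ → ℝ}
    (hF : ContinuousOn F D) (hpos : ∀ x ∈ interior D, 0 < F x)
    (hF' : ∀ x ∈ interior D, HasDerivAt F (F' x) x)
    (hF'' : ∀ x ∈ interior D, HasDerivAt F' (F'' x) x)
    (hle : ∀ x ∈ interior D, F' x ^ 2 ≤ 2 * F x * F'' x) :
    ConvexOn ℝ D fun x => √(F x) := by
  refine convexOn_of_hasDerivWithinAt2_nonneg hD hF.sqrt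
    (f' := fun x => F' x / (2 * √(F x)))
    (fun x hx => ((hF' x hx).sqrt (hpos x hx).ne').hasDerivWithinAt)
    (fun x hx => ((hF'' x hx).div (((hF' x hx).sqrt (hpos x hx).ne').const_mul 2)
      (by have := hpos x hx; positivity)).hasDerivWithinAt) fun x hx => ?_
  have hs : 0 < √(F x) := sqrt_pos.2 (hpos x hx)
  have hsq : √(F x) ^ 2 = F x := sq_sqrt (hpos x hx).le
  have key : 0 ≤ F'' x * (2 * √(F x)) - F' x * (2 * (F' x / (2 * √(F x)))) := by
    rw [show F'' x * (2 * √(F x)) - F' x * (2 * (F' x / (2 * √(F x))))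
        = (2 * F x * F'' x - F' x ^ 2) / √(F x) by field_simp; rw [hsq]]
    exact div_nonneg (by linarith [hle x hx]) hs.le
  exact div_nonneg key (sq_nonneg _)

theorem hasDerivAt_sqrt_one_add {x : ℝ} (hx : -1 < x) :
    HasDerivAt (fun t => √(1 + t)) (1 / (2 * √(1 + x))) x := by
  simpa using ((hasDerivAt_id x).const_add 1).sqrt (by linarith : (1:ℝ) + x ≠ 0)

theorem hasDerivAt_inv_two_mul_sqrt_one_add {x : ℝ} (hx : -1 < x) :
    HasDerivAt (fun t => 1 / (2 * √(1 + t))) (-1 / (4 * √(1 + x) ^ 3)) x := by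
  have hs : 0 < √(1 + x) := sqrt_pos.2 (by linarith)
  refine ((hasDerivAt_const x (1 : ℝ)).div ((hasDerivAt_sqrt_one_add hx).const_mul 2)
    (by positivity)).congr_deriv ?_
  field_simp
  ring

theorem sq_deriv_le_two_mul_mul_deriv2 {t : ℝ} (ht : 0 ≤ t) :
    (1 / (2 * √(1 + t)) + 2 * t) ^ 2 ≤ 2 * (√(1 + t) + t ^ 2) * (-1 / (4 * √(1 + t) ^ 3) + 2) := by
  obtain ⟨u, hu1, rfl⟩ : ∃ u : ℝ, 1 ≤ u ∧ t = u ^ 2 - 1 :=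
    ⟨√(1 + t), one_le_sqrt.2 (by linarith), by rw [sq_sqrt (by linarith)]; ring⟩
  have hu : √(1 + (u ^ 2 - 1)) = u := by rw [add_sub_cancel, sqrt_sq (by linarith)]
  rw [hu, ← sub_nonneg]
  have expand : 2 * (u + (u ^ 2 - 1) ^ 2) * (-1 / (4 * u ^ 3) + 2)
      - (1 / (2 * u) + 2 * (u ^ 2 - 1)) ^ 2 = (6 * u ^ 4 + 12 * u ^ 2 - 3 * u - 2) / (4 * u ^ 3) := by
    field_simp
    ring
  rw [expand]
  apply div_nonneg _ (by positivity)
  nlinarith [mul_le_mul hu1 hu1 zero_le_one (by linarith : (0:ℝ) ≤ u)]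

theorem antitoneOn_deriv_div_self :
    AntitoneOn (fun t : ℝ => (1 / (2 * √(1 + t)) + 2 * t) / t) (Ioi 0) := by
  have eq : ∀ x : ℝ, 0 < x → (1 / (2 * √(1 + x)) + 2 * x) / x = 1 / (2 * (x * √(1 + x))) + 2 := by
    intro x hx
    have : 0 < √(1 + x) := sqrt_pos.2 (by linarith)
    field_simp
  intro s hs t ht hst
  simp only [mem_Ioi] at hs ht
  simp only [eq s hs, eq t ht]
  gcongr

/-- For `F t = √(1+t) + t²` (with `F' t = 1/(2√(1+t)) + 2t`), the map
`t ↦ F' t / t` is non-increasing on `(0,∞)`, while `t ↦ F t ^ (1/2)` is convex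
on `[0,∞)`. -/
theorem stmt_2 :
    AntitoneOn (fun t : ℝ => (1 / (2 * Real.sqrt (1 + t)) + 2 * t) / t) (Set.Ioi 0) ∧
    ConvexOn ℝ (Set.Ici 0) (fun t : ℝ => (Real.sqrt (1 + t) + t ^ 2) ^ ((1:ℝ) / 2)) := by
  refine ⟨antitoneOn_deriv_div_self, ?_⟩
  have pos : ∀ x ∈ interior (Ici (0:ℝ)), 0 < x := fun x hx => by rwa [interior_Ici] at hx
  simp only [← sqrt_eq_rpow]
  refine convexOn_sqrt_of_sq_deriv_le (F' := fun t => 1 / (2 * √(1 + t)) + 2 * t)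
    (F'' := fun t => -1 / (4 * √(1 + t) ^ 3) + 2) (convex_Ici 0) (by fun_prop)
    (fun x hx => by have := pos x hx; positivity)
    (fun x hx => ((hasDerivAt_sqrt_one_add (by linarith [pos x hx])).add
      (hasDerivAt_pow 2 x)).congr_deriv (by ring))
    (fun x hx => ((hasDerivAt_inv_two_mul_sqrt_one_add (by linarith [pos x hx])).add
      ((hasDerivAt_id x).const_mul 2)).congr_deriv (by ring))
    (fun x hx => sq_deriv_le_two_mul_mul_deriv2 (pos x hx).le)
end

section
/- Let G : [0, ∞) → [0, ∞) be continuous and concave with G(0) = 0 and G(t) > 0 for all t > 0. Define φ(t) = ∫₁^t 1/G(τ) dτ for t ∈ (0, ∞); then φ is strictly increasing on (0, ∞), and denoting by ψ the inverse function of φ (defined on the image interval φ((0, ∞))), the function s ↦ log ψ(s) is concave on that interval. -/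
/-!
Substituting `t = exp x`, the function `h = φ ∘ exp` has derivative `exp x / G (exp x)`.
Concavity of `G` together with `G 0 = 0` makes `G t / t` decreasing, so this derivative is
increasing and `h` is convex and strictly increasing. Since `log ∘ ψ` inverts `h` on its
range, it is concave there, as the inverse of any increasing convex function is.
-/

open Set Filter intervalIntegral
open Real

theorem ConcaveOn.antitoneOn_div_self_s3 {G : ℝ → ℝ} (hconc : ConcaveOn ℝ (Ici 0) G)
    (h0 : 0 ≤ G 0) : AntitoneOn (fun t => G t / t) (Ioi 0) := by
  intro s (hs : 0 < s) t (ht : 0 < t) hst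
  have hst' : s / t ≤ 1 := (div_le_one ht).2 hst
  have hchord : (1 - s / t) * G 0 + s / t * G t ≤ G ((1 - s / t) • 0 + (s / t) • t) :=
    hconc.2 self_mem_Ici (mem_Ici.2 ht.le) (by linarith) (by positivity) (by ring)
  have hpoint : (1 - s / t) • (0 : ℝ) + (s / t) • t = s := by
    rw [smul_eq_mul, smul_eq_mul, mul_zero, zero_add, div_mul_cancel₀ s ht.ne']
  rw [hpoint] at hchord
  have hchord' : s / t * G t ≤ G s := by
    linarith [mul_nonneg (sub_nonneg.2 hst') h0]
  rw [div_le_div_iff₀ ht hs]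
  calc G t * s = t * (s / t * G t) := by field_simp
    _ ≤ t * G s := by gcongr
    _ = G s * t := mul_comm _ _

theorem hasDerivAt_integral_of_continuousOn {f : ℝ → ℝ} {s : Set ℝ} (hs : IsOpen s)
    [hs' : s.OrdConnected] (hf : ContinuousOn f s) {a t : ℝ} (ha : a ∈ s) (ht : t ∈ s) :
    HasDerivAt (fun u => ∫ τ in a..u, f τ) (f t) t :=
  integral_hasDerivAt_right (hf.mono (hs'.uIcc_subset ha ht)).intervalIntegrable
    (hf.stronglyMeasurableAtFilter hs t ht) (hf.continuousAt (hs.mem_nhds ht))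

theorem ConvexOn.concaveOn_range_of_leftInverse {h g : ℝ → ℝ} (hconv : ConvexOn ℝ univ h)
    (hmono : StrictMono h) (hgh : Function.LeftInverse g h) : ConcaveOn ℝ (range h) g := by
  have hcont : Continuous h := continuousOn_univ.1 (hconv.continuousOn isOpen_univ)
  have hrange : Convex ℝ (range h) := (isPreconnected_range hcont).ordConnected.convex
  refine ⟨hrange, ?_⟩
  rintro _ ⟨x, rfl⟩ _ ⟨y, rfl⟩ a b ha hb hab
  obtain ⟨z, hz⟩ := hrange (mem_range_self x) (mem_range_self y) ha hb hab
  rw [← hz, hgh x, hgh y, hgh z]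
  exact hmono.le_iff_le.1 (hz ▸ hconv.2 trivial trivial ha hb hab)

theorem hasDerivAt_comp_exp {φ G : ℝ → ℝ}
    (hφ : ∀ t ∈ Ioi (0 : ℝ), HasDerivAt φ (1 / G t) t) (x : ℝ) :
    HasDerivAt (φ ∘ exp) (G (exp x) / exp x)⁻¹ x := by
  have hcomp := (hφ (exp x) (exp_pos x)).comp x (hasDerivAt_exp x)
  rwa [one_div_mul_eq_div, ← inv_div] at hcomp

theorem stmt_3_general (G : ℝ → ℝ)
    (hGcont : ContinuousOn G (Set.Ici 0))
    (hGconc : ConcaveOn ℝ (Set.Ici 0) G)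
    (hG0 : G 0 = 0)
    (hGpos : ∀ t ∈ Set.Ioi (0:ℝ), 0 < G t)
    (φ ψ : ℝ → ℝ)
    (hφ : ∀ t ∈ Set.Ioi (0:ℝ), φ t = ∫ τ in (1:ℝ)..t, 1 / G τ)
    (hψ : ∀ t ∈ Set.Ioi (0:ℝ), ψ (φ t) = t) :
    StrictMonoOn φ (Set.Ioi 0) ∧
    ConcaveOn ℝ (φ '' Set.Ioi 0) (fun s => Real.log (ψ s)) := by
  have hinv : ContinuousOn (fun τ => 1 / G τ) (Ioi 0) :=
    continuousOn_const.div (hGcont.mono Ioi_subset_Ici_self) fun t ht => (hGpos t ht).ne'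
  have hderiv (t : ℝ) (ht : t ∈ Ioi 0) : HasDerivAt φ (1 / G t) t :=
    (hasDerivAt_integral_of_continuousOn isOpen_Ioi hinv (mem_Ioi.2 one_pos) ht)
      |>.congr_of_eventuallyEq (eventually_of_mem (isOpen_Ioi.mem_nhds ht) hφ)
  have hslope_pos (x : ℝ) : 0 < (G (exp x) / exp x)⁻¹ :=
    inv_pos.2 (div_pos (hGpos _ (exp_pos x)) (exp_pos x))
  have hslope_mono : Monotone fun x => (G (exp x) / exp x)⁻¹ := fun x y hxy =>
    inv_anti₀ (div_pos (hGpos _ (exp_pos y)) (exp_pos y))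
      (hGconc.antitoneOn_div_self_s3 hG0.ge (exp_pos x) (exp_pos y) (exp_le_exp.2 hxy))
  have hconv : ConvexOn ℝ univ (φ ∘ exp) :=
    Monotone.convexOn_univ_of_deriv (fun x => (hasDerivAt_comp_exp hderiv x).differentiableAt)
      ((funext fun x => (hasDerivAt_comp_exp hderiv x).deriv) ▸ hslope_mono)
  have hinverse : Function.LeftInverse (log ∘ ψ) (φ ∘ exp) := fun x => by
    simp only [Function.comp_apply, hψ _ (exp_pos x), log_exp]
  refine ⟨strictMonoOn_of_hasDerivWithinAt_pos (convex_Ioi 0)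
    (fun t ht => (hderiv t ht).continuousAt.continuousWithinAt)
    (fun t ht => (hderiv t (interior_subset ht)).hasDerivWithinAt)
    (fun t ht => one_div_pos.2 (hGpos t (interior_subset ht))), ?_⟩
  rw [← range_exp, ← range_comp]
  exact hconv.concaveOn_range_of_leftInverse
    (strictMono_of_hasDerivAt_pos (hasDerivAt_comp_exp hderiv) hslope_pos) hinverse

/-- Let `G : [0,∞) → [0,∞)` be continuous and concave with `G 0 = 0` and
`G > 0` on `(0,∞)`. Define `φ t = ∫ τ in 1..t, 1 / G τ` for `t > 0`; then `φ` is strictly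
increasing on `(0,∞)` and, for any inverse `ψ` of `φ` on the image `φ '' (0,∞)`,
the function `s ↦ log (ψ s)` is concave on that image. -/
theorem stmt_3 (G : ℝ → ℝ)
    (hGnonneg : ∀ t ∈ Set.Ici (0:ℝ), 0 ≤ G t)
    (hGcont : ContinuousOn G (Set.Ici 0))
    (hGconc : ConcaveOn ℝ (Set.Ici 0) G)
    (hG0 : G 0 = 0)
    (hGpos : ∀ t ∈ Set.Ioi (0:ℝ), 0 < G t)
    (φ ψ : ℝ → ℝ)
    (hφ : ∀ t ∈ Set.Ioi (0:ℝ), φ t = ∫ τ in (1:ℝ)..t, 1 / G τ)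
    (hψ : ∀ t ∈ Set.Ioi (0:ℝ), ψ (φ t) = t) :
    StrictMonoOn φ (Set.Ioi 0) ∧
    ConcaveOn ℝ (φ '' Set.Ioi 0) (fun s => Real.log (ψ s)) :=
  stmt_3_general G hGcont hGconc hG0 hGpos φ ψ hφ hψ
end

section
/- Let p > 1, let f : (0, ∞) → [0, ∞) be continuous with M := inf{t > 0 : f(t) = 0} ∈ (0, ∞] (so f > 0 on (0, M)), and set F(t) = ∫₀^t f(τ) dτ, assumed finite for each t > 0. Suppose F^{1/p} is concave on [0, ∞) and F/f is convex on (0, M). Define φ(t) = ∫₁^t F(s)^{-1/p} ds for t ∈ (0, M). Then: (i) φ is twice differentiable on (0, M) with φ'(t) = F(t)^{-1/p} > 0 and φ''(t) = −f(t)/(p · F(t)^{1+1/p}) < 0 for all t ∈ (0, M); (ii) φ'(t) → +∞ as t → 0⁺; (iii) φ(t)/φ'(t) → 0 as t → 0⁺; (iv) φ'(t)/φ''(t) → 0 as t → 0⁺. -/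
/-!
Write `G = F^{1/p}`, so that `φ' = 1/G`. The function `G` is concave on `[0, ∞)`, vanishes at `0`,
tends to `0` at `0⁺`, and is positive and nondecreasing on `(0, ∞)`; (ii) is immediate.

For (iv), `φ'/φ'' = -G/G'`, and concavity bounds `G'(t)` from below by the chord slope
`(G m - G t)/(m - t)`, which stays away from `0` as `t → 0⁺`.

For (iii), `-φ/φ' = G t * ∫_t^1 1/G`. Concavity gives `G s ≥ s G 1` and monotonicity `G s ≥ G t`;
either bound alone is too weak (the first only gives `G t * log (1/t)`), but their geometric
mean gives `G t * ∫_t^1 1/G ≤ 2 √(G t / G 1) → 0`.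
-/

open Set Filter intervalIntegral MeasureTheory Topology

theorem hasDerivAt_integral_of_continuousOn_s4 {g : ℝ → ℝ} {U : Set ℝ} {a t : ℝ} (hU : IsOpen U)
    (hg : ContinuousOn g U) (ht : t ∈ U) (hint : IntervalIntegrable g volume a t) :
    HasDerivAt (fun u => ∫ x in a..u, g x) (g t) t :=
  integral_hasDerivAt_right hint (hg.stronglyMeasurableAtFilter hU t ht)
    (hg.continuousAt (hU.mem_nhds ht))

section Primitive

variable {f F : ℝ → ℝ} (hF : ∀ t, F t = ∫ τ in (0:ℝ)..t, f τ)
  (hint : ∀ t, 0 < t → IntervalIntegrable f volume 0 t)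
include hF hint

theorem hasDerivAt_primitive (hf : ContinuousOn f (Ioi 0)) {t : ℝ} (ht : 0 < t) :
    HasDerivAt F (f t) t := by
  rw [funext hF]
  exact hasDerivAt_integral_of_continuousOn_s4 isOpen_Ioi hf ht (hint t ht)

theorem monotoneOn_primitive (hf : ContinuousOn f (Ioi 0)) (hf0 : ∀ t ∈ Ioi 0, 0 ≤ f t) :
    MonotoneOn F (Ioi 0) := by
  have hd : ∀ t ∈ Ioi (0:ℝ), HasDerivAt F (f t) t := fun t ht => hasDerivAt_primitive hF hint hf ht
  refine monotoneOn_of_hasDerivWithinAt_nonneg (f' := f) (convex_Ioi 0)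
    (fun t ht => (hd t ht).continuousAt.continuousWithinAt) (fun t ht => ?_) (fun t ht => ?_)
  all_goals rw [interior_Ioi] at ht
  exacts [(hd t ht).hasDerivWithinAt, hf0 t ht]

theorem primitive_pos (hf : ContinuousOn f (Ioi 0)) (hf0 : ∀ t ∈ Ioi 0, 0 ≤ f t) {m : ℝ}
    (hm : 0 < m) (hfm : ∀ t ∈ Ioo 0 m, 0 < f t) {t : ℝ} (ht : 0 < t) : 0 < F t := by
  have hmin : 0 < min t m := lt_min ht hm
  calc 0 < F (min t m) := by
        rw [hF]
        refine intervalIntegral_pos_of_pos_on (hint _ hmin) (fun s hs => hfm s ?_) hmin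
        exact ⟨hs.1, hs.2.trans_le (min_le_right t m)⟩
    _ ≤ F t := monotoneOn_primitive hF hint hf hf0 hmin ht (min_le_left t m)

theorem tendsto_primitive_nhdsGT_zero : Tendsto F (𝓝[>] 0) (𝓝 0) := by
  have h : ContinuousWithinAt F (Icc 0 1) 0 := by
    rw [funext hF]
    exact continuousWithinAt_primitive Real.volume_singleton (by simpa using hint 1 one_pos)
  rw [continuousWithinAt_Icc_iff_Ici one_pos] at h
  simpa [hF] using (h.mono Ioi_subset_Ici_self).tendsto

end Primitive

section Concave

variable {G : ℝ → ℝ}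

theorem ConcaveOn.mul_le_of_map_zero (hG : ConcaveOn ℝ (Ici 0) G) (hG0 : G 0 = 0) {s : ℝ}
    (hs0 : 0 ≤ s) (hs1 : s ≤ 1) : s * G 1 ≤ G s := by
  have h := hG.2 (mem_Ici.2 zero_le_one) (mem_Ici.2 le_rfl) hs0 (sub_nonneg.2 hs1) (by ring)
  simpa [hG0] using h

theorem mul_integral_inv_le_two_sqrt {t : ℝ} (ht : 0 < t) (ht1 : t ≤ 1)
    (hchord : ∀ s ∈ Icc t 1, s * G 1 ≤ G s) (hmono : MonotoneOn G (Icc t 1)) (hGt : 0 < G t)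
    (hG1 : 0 < G 1) : G t * ∫ s in t..1, (G s)⁻¹ ≤ 2 * √(G t / G 1) := by
  set C := √(G t * G 1) with hC
  have hC0 : 0 < C := Real.sqrt_pos.2 (mul_pos hGt hG1)
  have hGpos : ∀ s ∈ Icc t 1, 0 < G s := fun s hs => hGt.trans_le (hmono ⟨le_rfl, ht1⟩ hs hs.1)
  have hbound : ∀ s ∈ Icc t 1, (G s)⁻¹ ≤ C⁻¹ * s ^ (-(1 / 2) : ℝ) := by
    intro s hs
    have hs0 : 0 < s := ht.trans_le hs.1
    have hmean : C * s ^ (1 / 2 : ℝ) ≤ G s := by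
      rw [hC, ← Real.sqrt_eq_rpow, ← Real.sqrt_mul (mul_pos hGt hG1).le, Real.sqrt_le_iff]
      refine ⟨(hGpos s hs).le, ?_⟩
      have h1 := hmono ⟨le_rfl, ht1⟩ hs hs.1
      have h2 := hchord s hs
      nlinarith [hGt.le, hs0.le]
    rw [Real.rpow_neg hs0.le, ← mul_inv]
    exact inv_anti₀ (by positivity) hmean
  have hint : IntervalIntegrable (fun s => (G s)⁻¹) volume t 1 := by
    refine AntitoneOn.intervalIntegrable fun a ha b hb hab => ?_
    rw [uIcc_of_le ht1] at ha hb
    exact inv_anti₀ (hGpos a ha) (hmono ha hb hab)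
  have hrpow : ∫ s in t..1, s ^ (-(1 / 2) : ℝ) ≤ 2 := by
    rw [integral_rpow (Or.inl (by norm_num)), div_le_iff₀ (by norm_num)]
    norm_num
    linarith [Real.rpow_nonneg ht.le (1 / 2 : ℝ)]
  calc G t * ∫ s in t..1, (G s)⁻¹
      ≤ G t * ∫ s in t..1, C⁻¹ * s ^ (-(1 / 2) : ℝ) := by
        gcongr
        exact integral_mono_on ht1 hint
          ((intervalIntegrable_rpow' (by norm_num)).const_mul _) hbound
    _ ≤ G t * (C⁻¹ * 2) := by
        rw [intervalIntegral.integral_const_mul]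
        gcongr
    _ = 2 * √(G t / G 1) := by
        rw [hC, Real.sqrt_div' _ hG1.le, Real.sqrt_mul hGt.le]
        have := Real.mul_self_sqrt hGt.le
        have : 0 < √(G t) := Real.sqrt_pos.2 hGt
        have : 0 < √(G 1) := Real.sqrt_pos.2 hG1
        field_simp
        nlinarith

theorem tendsto_mul_integral_inv_nhdsGT_zero (hconc : ConcaveOn ℝ (Ici 0) G) (hG0 : G 0 = 0)
    (hmono : MonotoneOn G (Ioi 0)) (hpos : ∀ s, 0 < s → 0 < G s)
    (hlim : Tendsto G (𝓝[>] 0) (𝓝 0)) :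
    Tendsto (fun t => G t * ∫ s in t..1, (G s)⁻¹) (𝓝[>] 0) (𝓝 0) := by
  have hsqrt : Tendsto (fun t => 2 * √(G t / G 1)) (𝓝[>] 0) (𝓝 0) := by
    simpa using ((hlim.div_const (G 1)).sqrt).const_mul 2
  refine squeeze_zero' ?_ ?_ hsqrt
  all_goals filter_upwards [Ioo_mem_nhdsGT one_pos] with t ht
  · refine mul_nonneg (hpos t ht.1).le (integral_nonneg ht.2.le fun s hs => ?_)
    exact (inv_pos.2 (hpos s (ht.1.trans_le hs.1))).le
  · exact mul_integral_inv_le_two_sqrt ht.1 ht.2.le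
      (fun s hs => hconc.mul_le_of_map_zero hG0 (ht.1.trans_le hs.1).le hs.2)
      (hmono.mono fun s hs => ht.1.trans_le hs.1) (hpos t ht.1) (hpos 1 one_pos)

theorem ConcaveOn.tendsto_div_deriv_nhdsGT_zero {G' : ℝ → ℝ} {m : ℝ}
    (hconc : ConcaveOn ℝ (Ici 0) G) (hm : 0 < m) (hGm : 0 < G m)
    (hderiv : ∀ t ∈ Ioo 0 m, HasDerivAt G (G' t) t) (hnonneg : ∀ t, 0 < t → 0 ≤ G t)
    (hlim : Tendsto G (𝓝[>] 0) (𝓝 0)) :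
    Tendsto (fun t => G t / G' t) (𝓝[>] 0) (𝓝 0) := by
  have hbound : Tendsto (fun t => m * G t / (G m - G t)) (𝓝[>] 0) (𝓝 0) := by
    have h := (hlim.const_mul m).div (tendsto_const_nhds.sub hlim) (by simpa using hGm.ne')
    rwa [mul_zero, zero_div] at h
  have hsq : ∀ᶠ t in 𝓝[>] 0, 0 ≤ G t / G' t ∧ G t / G' t ≤ m * G t / (G m - G t) := by
    filter_upwards [Ioo_mem_nhdsGT hm, hlim.eventually_lt_const hGm] with t ht hGt
    have hslope : (G m - G t) / (m - t) ≤ G' t := by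
      simpa [slope_def_field] using
        hconc.slope_le_of_hasDerivAt ht.1.le hm.le ht.2 (hderiv t ht)
    have hslope_pos : 0 < (G m - G t) / (m - t) := div_pos (sub_pos.2 hGt) (sub_pos.2 ht.2)
    have hGt0 := hnonneg t ht.1
    refine ⟨div_nonneg hGt0 (hslope_pos.trans_le hslope).le, ?_⟩
    calc G t / G' t ≤ G t / ((G m - G t) / (m - t)) :=
          div_le_div_of_nonneg_left hGt0 hslope_pos hslope
      _ = (m - t) * G t / (G m - G t) := by field_simp
      _ ≤ m * G t / (G m - G t) := by
          gcongr
          linarith [ht.1]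
  exact squeeze_zero' (hsq.mono fun _ h => h.1) (hsq.mono fun _ h => h.2) hbound

end Concave

theorem HasDerivAt.rpow_neg_one_div {F : ℝ → ℝ} {F' p t : ℝ} (hF : HasDerivAt F F' t)
    (hFt : 0 < F t) :
    HasDerivAt (fun s => F s ^ (-(1 / p))) (-(F' / (p * F t ^ (1 + 1 / p)))) t := by
  convert hF.rpow_const (p := -(1 / p)) (Or.inl hFt.ne') using 1
  rw [show -(1 / p) - 1 = -(1 + 1 / p) by ring, Real.rpow_neg hFt.le]
  field_simp

theorem rpow_neg_one_div_div_eq {p x y : ℝ} (hp : p ≠ 0) (hx : 0 < x) :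
    x ^ (-(1 / p)) / (-(y / (p * x ^ (1 + 1 / p)))) =
      -(x ^ (1 / p) / (y * (1 / p) * x ^ (1 / p - 1))) := by
  rw [Real.rpow_neg hx.le, Real.rpow_add hx, Real.rpow_sub hx, Real.rpow_one]
  have : 0 < x ^ (1 / p) := Real.rpow_pos_of_pos hx _
  field_simp

section ConcaveRpow

variable {F : ℝ → ℝ} {p : ℝ} (hp : 0 < p) (hFpos : ∀ t, 0 < t → 0 < F t)
  (hFlim : Tendsto F (𝓝[>] 0) (𝓝 0)) (hconc : ConcaveOn ℝ (Ici 0) fun t => F t ^ (1 / p))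
include hp hFpos hFlim hconc

theorem tendsto_integral_rpow_neg_div_nhdsGT_zero (hF0 : F 0 = 0) (hmono : MonotoneOn F (Ioi 0)) :
    Tendsto (fun t => (∫ s in (1:ℝ)..t, F s ^ (-(1 / p))) / F t ^ (-(1 / p))) (𝓝[>] 0) (𝓝 0) := by
  have hrpow_neg : ∀ t, 0 < t → F t ^ (-(1 / p)) = (F t ^ (1 / p))⁻¹ :=
    fun t ht => Real.rpow_neg (hFpos t ht).le _
  have hGmono : MonotoneOn (fun t => F t ^ (1 / p)) (Ioi 0) := fun s hs t ht hst =>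
    Real.rpow_le_rpow (hFpos s hs).le (hmono hs ht hst) (by positivity)
  have h := (tendsto_mul_integral_inv_nhdsGT_zero hconc (by simp [hF0, hp.ne']) hGmono
    (fun t ht => Real.rpow_pos_of_pos (hFpos t ht) _)
    (hFlim.rpow_const_nhds_zero (by positivity))).neg
  rw [neg_zero] at h
  refine h.congr' (eventually_nhdsWithin_of_forall fun t ht => ?_)
  dsimp only
  rw [hrpow_neg t ht, div_inv_eq_mul, integral_symm t 1,
    integral_congr fun s hs => hrpow_neg s ((lt_min ht one_pos).trans_le hs.1)]
  ring

theorem tendsto_rpow_neg_div_deriv_nhdsGT_zero {f : ℝ → ℝ} {m : ℝ} (hm : 0 < m)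
    (hFd : ∀ t ∈ Ioo 0 m, HasDerivAt F (f t) t) :
    Tendsto (fun t => F t ^ (-(1 / p)) / (-(f t / (p * F t ^ (1 + 1 / p))))) (𝓝[>] 0) (𝓝 0) := by
  have hGd : ∀ t ∈ Ioo 0 m, HasDerivAt (fun t => F t ^ (1 / p))
      (f t * (1 / p) * F t ^ (1 / p - 1)) t :=
    fun t ht => (hFd t ht).rpow_const (Or.inl (hFpos t ht.1).ne')
  have h := (hconc.tendsto_div_deriv_nhdsGT_zero hm (Real.rpow_pos_of_pos (hFpos m hm) _) hGd
    (fun t ht => (Real.rpow_pos_of_pos (hFpos t ht) _).le)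
    (hFlim.rpow_const_nhds_zero (by positivity))).neg
  rw [neg_zero] at h
  refine h.congr' (eventually_nhdsWithin_of_forall fun t ht => ?_)
  exact (rpow_neg_one_div_div_eq hp.ne' (hFpos t ht)).symm

end ConcaveRpow

theorem stmt_4_general (p : ℝ) (hp : 1 < p) (f : ℝ → ℝ) (M : EReal)
    (hf_cont : ContinuousOn f (Set.Ioi 0))
    (hf_nonneg : ∀ t ∈ Set.Ioi (0:ℝ), 0 ≤ f t)
    (hM0 : 0 < M)
    (hf_pos : ∀ t : ℝ, 0 < t → (t : EReal) < M → 0 < f t)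
    (hint : ∀ t : ℝ, 0 < t → IntervalIntegrable f MeasureTheory.volume 0 t)
    (F : ℝ → ℝ) (hF : ∀ t, F t = ∫ τ in (0:ℝ)..t, f τ)
    (hFconc : ConcaveOn ℝ (Set.Ici 0) (fun t => F t ^ (1 / p)))
    (φ : ℝ → ℝ) (hφ : ∀ t : ℝ, 0 < t → φ t = ∫ s in (1:ℝ)..t, F s ^ (-(1 / p))) :
    (∀ t : ℝ, 0 < t → (t : EReal) < M →
      HasDerivAt φ (F t ^ (-(1 / p))) t ∧
      0 < F t ^ (-(1 / p)) ∧
      HasDerivAt (fun s => F s ^ (-(1 / p))) (-(f t / (p * F t ^ (1 + 1 / p)))) t ∧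
      -(f t / (p * F t ^ (1 + 1 / p))) < 0) ∧
    Tendsto (fun t => F t ^ (-(1 / p))) (nhdsWithin 0 (Set.Ioi 0)) atTop ∧
    Tendsto (fun t => φ t / F t ^ (-(1 / p))) (nhdsWithin 0 (Set.Ioi 0)) (nhds 0) ∧
    Tendsto (fun t => F t ^ (-(1 / p)) / (-(f t / (p * F t ^ (1 + 1 / p)))))
      (nhdsWithin 0 (Set.Ioi 0)) (nhds 0) := by
  have hp0 : 0 < p := zero_lt_one.trans hp
  obtain ⟨m, hm0, hmM⟩ := EReal.lt_iff_exists_real_btwn.1 hM0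
  replace hm0 : 0 < m := by exact_mod_cast hm0
  have hFd : ∀ t, 0 < t → HasDerivAt F (f t) t := fun t => hasDerivAt_primitive hF hint hf_cont
  have hfm : ∀ t ∈ Ioo 0 m, 0 < f t :=
    fun t ht => hf_pos t ht.1 ((EReal.coe_lt_coe_iff.2 ht.2).trans hmM)
  have hFpos : ∀ t, 0 < t → 0 < F t :=
    fun t => primitive_pos hF hint hf_cont hf_nonneg hm0 hfm
  have hFlim := tendsto_primitive_nhdsGT_zero hF hint
  have hψd : ∀ t, 0 < t → HasDerivAt (fun s => F s ^ (-(1 / p)))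
      (-(f t / (p * F t ^ (1 + 1 / p)))) t := fun t ht => (hFd t ht).rpow_neg_one_div (hFpos t ht)
  have hψc : ContinuousOn (fun s => F s ^ (-(1 / p))) (Ioi 0) :=
    fun s hs => (hψd s hs).continuousAt.continuousWithinAt
  refine ⟨fun t ht htM => ⟨?_, Real.rpow_pos_of_pos (hFpos t ht) _, hψd t ht, ?_⟩, ?_, ?_, ?_⟩
  · refine (hasDerivAt_integral_of_continuousOn_s4 isOpen_Ioi hψc ht ?_).congr_of_eventuallyEq
      (eventually_of_mem (Ioi_mem_nhds ht) hφ)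
    exact (hψc.mono fun s hs => (lt_min one_pos ht).trans_le hs.1).intervalIntegrable
  · have := hf_pos t ht htM
    have := hFpos t ht
    exact neg_neg_of_pos (by positivity)
  · exact (tendsto_rpow_neg_nhdsGT_zero (by simpa using hp0)).comp
      (tendsto_nhdsWithin_iff.2 ⟨hFlim, eventually_nhdsWithin_of_forall hFpos⟩)
  · refine (tendsto_integral_rpow_neg_div_nhdsGT_zero hp0 hFpos hFlim hFconc (by simp [hF])
      (monotoneOn_primitive hF hint hf_cont hf_nonneg)).congr' ?_
    exact eventually_nhdsWithin_of_forall fun t ht => by simp only [hφ t ht]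
  · exact tendsto_rpow_neg_div_deriv_nhdsGT_zero hp0 hFpos hFlim hFconc hm0 fun t ht => hFd t ht.1

/-- Let `p > 1`, `f : (0,∞) → [0,∞)` continuous, with
`M = inf {t > 0 : f t = 0} ∈ (0,∞]` (infimum taken in `EReal`, so `M = ⊤` if the set is
empty; in particular `f > 0` on `(0,M)`), `F t = ∫ τ in 0..t, f τ` finite for `t > 0`,
`F^{1/p}` concave on `[0,∞)`, `F/f` convex on `(0,M)`, and
`φ t = ∫ s in 1..t, F s ^ (-(1/p))`. Then:
(i) on `(0,M)`, `φ' t = F t ^ (-(1/p)) > 0` and `φ'' t = -(f t / (p * F t ^ (1+1/p))) < 0`;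
(ii) `φ' t → +∞` as `t → 0⁺`;
(iii) `φ t / φ' t → 0` as `t → 0⁺`;
(iv) `φ' t / φ'' t → 0` as `t → 0⁺`. -/
theorem stmt_4 (p : ℝ) (hp : 1 < p) (f : ℝ → ℝ) (M : EReal)
    (hf_cont : ContinuousOn f (Set.Ioi 0))
    (hf_nonneg : ∀ t ∈ Set.Ioi (0:ℝ), 0 ≤ f t)
    (hM : M = sInf {x : EReal | ∃ t : ℝ, 0 < t ∧ f t = 0 ∧ x = (t : EReal)})
    (hM0 : 0 < M)
    (hf_pos : ∀ t : ℝ, 0 < t → (t : EReal) < M → 0 < f t)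
    (hint : ∀ t : ℝ, 0 < t → IntervalIntegrable f MeasureTheory.volume 0 t)
    (F : ℝ → ℝ) (hF : ∀ t, F t = ∫ τ in (0:ℝ)..t, f τ)
    (hFconc : ConcaveOn ℝ (Set.Ici 0) (fun t => F t ^ (1 / p)))
    (hFf : ConvexOn ℝ {t : ℝ | 0 < t ∧ (t : EReal) < M} (fun t => F t / f t))
    (φ : ℝ → ℝ) (hφ : ∀ t : ℝ, 0 < t → φ t = ∫ s in (1:ℝ)..t, F s ^ (-(1 / p))) :
    (∀ t : ℝ, 0 < t → (t : EReal) < M →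
      HasDerivAt φ (F t ^ (-(1 / p))) t ∧
      0 < F t ^ (-(1 / p)) ∧
      HasDerivAt (fun s => F s ^ (-(1 / p))) (-(f t / (p * F t ^ (1 + 1 / p)))) t ∧
      -(f t / (p * F t ^ (1 + 1 / p))) < 0) ∧
    Tendsto (fun t => F t ^ (-(1 / p))) (nhdsWithin 0 (Set.Ioi 0)) atTop ∧
    Tendsto (fun t => φ t / F t ^ (-(1 / p))) (nhdsWithin 0 (Set.Ioi 0)) (nhds 0) ∧
    Tendsto (fun t => F t ^ (-(1 / p)) / (-(f t / (p * F t ^ (1 + 1 / p)))))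
      (nhdsWithin 0 (Set.Ioi 0)) (nhds 0) :=
  stmt_4_general p hp f M hf_cont hf_nonneg hM0 hf_pos hint F hF hFconc φ hφ
end

section
/- Let p > 1, let f : (0, M) → (0, ∞) be continuous, where M ∈ (0, ∞], such that F(t) := ∫₀^t f(τ) dτ is finite for each t ∈ (0, M). Suppose F^{1/p} is concave on (0, M) with F(0⁺) = 0 and F/f is convex on (0, M). Then lim_{t → 0⁺} F(t)/f(t) = 0. -/
open Set Filter intervalIntegral

/-!
Writing `g = F / f`, convexity of `g` on `(0, b]` shows that if `g` does not tend to `0` at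
`0⁺`, then `g ≥ ε > 0` on some `(0, t₀]`. There `F' = f ≤ F / ε`, so by Grönwall
`F t₀ ≤ F t · exp ((t₀ - t) / ε)` for `0 < t < t₀`; letting `t → 0⁺` and using `F(0⁺) = 0`
gives `F t₀ ≤ 0`, contradicting `F > 0`.
-/

open Topology

theorem ConvexOn.le_add_mul_of_nonneg {g : ℝ → ℝ} {a b t t₀ : ℝ}
    (hg : ConvexOn ℝ (Ioc a b) g) (ht : a < t) (htt₀ : t ≤ t₀) (ht₀b : t₀ ≤ b)
    (hgt : 0 ≤ g t) (hgb : 0 ≤ g b) :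
    g t₀ ≤ g t + (t₀ - a) / (b - a) * g b := by
  have hab : a < b := ht.trans_le (htt₀.trans ht₀b)
  rcases htt₀.trans ht₀b |>.eq_or_lt with rfl | htb
  · obtain rfl : t₀ = t := le_antisymm ht₀b htt₀
    nlinarith [div_nonneg (sub_nonneg.2 ht.le) (sub_nonneg.2 hab.le)]
  set θ := (b - t₀) / (b - t)
  have hbt : 0 < b - t := sub_pos.2 htb
  have hθ_nonneg : 0 ≤ θ := div_nonneg (sub_nonneg.2 ht₀b) hbt.le
  have hθ_le : θ ≤ 1 := (div_le_one hbt).2 (by linarith)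
  have hcombo : θ * t + (1 - θ) * b = t₀ := by
    simp only [θ]; field_simp; ring
  have h1θ : 1 - θ ≤ (t₀ - a) / (b - a) := by
    rw [show 1 - θ = (t₀ - t) / (b - t) by simp only [θ]; field_simp; ring,
      div_le_div_iff₀ hbt (sub_pos.2 hab)]
    nlinarith
  have hconv := hg.2 ⟨ht, htb.le⟩ ⟨hab, le_rfl⟩ hθ_nonneg (sub_nonneg.2 hθ_le)
    (add_sub_cancel θ 1)
  simp only [smul_eq_mul, hcombo] at hconv
  nlinarith [mul_le_mul_of_nonneg_right h1θ hgb]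

theorem ConvexOn.tendsto_nhdsGT_or_exists_pos_le {g : ℝ → ℝ} {a b : ℝ} (hab : a < b)
    (hg : ConvexOn ℝ (Ioc a b) g) (hg_nonneg : ∀ t ∈ Ioc a b, 0 ≤ g t) :
    Tendsto g (𝓝[>] a) (𝓝 0) ∨ ∃ ε > 0, ∃ t₀ ∈ Ioc a b, ∀ t ∈ Ioc a t₀, ε ≤ g t := by
  refine or_iff_not_imp_left.2 fun hg_lim => ?_
  have hIoc : ∀ᶠ t in 𝓝[>] a, t ∈ Ioc a b := Ioc_mem_nhdsGT hab
  obtain ⟨ε, hε, hfreq⟩ : ∃ ε > 0, ∃ᶠ t in 𝓝[>] a, 2 * ε ≤ g t := by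
    by_contra! h
    refine hg_lim (tendsto_order.2 ⟨fun c hc => ?_, fun c hc => ?_⟩)
    · filter_upwards [hIoc] with t ht using hc.trans_le (hg_nonneg t ht)
    · simpa [not_frequently, mul_div_cancel₀] using h (c / 2) (half_pos hc)
  have hsmall : ∀ᶠ t in 𝓝[>] a, (t - a) / (b - a) * g b < ε := by
    have hcont : Continuous fun t => (t - a) / (b - a) * g b := by fun_prop
    have := (hcont.tendsto a).mono_left (nhdsWithin_le_nhds (s := Ioi a))
    simp only [sub_self, zero_div, zero_mul] at this
    exact this.eventually (gt_mem_nhds hε)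
  obtain ⟨t₀, hgt₀, ht₀_small, ht₀⟩ := (hfreq.and_eventually (hsmall.and hIoc)).exists
  refine ⟨ε, hε, t₀, ht₀, fun t ht => ?_⟩
  have := hg.le_add_mul_of_nonneg ht.1 ht.2 ht₀.2 (hg_nonneg t ⟨ht.1, ht.2.trans ht₀.2⟩)
    (hg_nonneg b ⟨hab, le_rfl⟩)
  linarith

theorem nonpos_of_deriv_le_mul_of_tendsto_zero {F f : ℝ → ℝ} {k a b : ℝ} (hab : a < b)
    (hF : ∀ u ∈ Ioc a b, HasDerivAt F (f u) u) (hf : ∀ u ∈ Ioc a b, f u ≤ k * F u)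
    (hF0 : Tendsto F (𝓝[>] a) (𝓝 0)) : F b ≤ 0 := by
  have hgronwall : ∀ c ∈ Ioo a b, F b ≤ F c * Real.exp (k * (b - c)) := fun c hc => by
    have hsub : Icc c b ⊆ Ioc a b := Icc_subset_Ioc_iff hc.2.le |>.2 ⟨hc.1, le_rfl⟩
    have := le_gronwallBound_of_liminf_deriv_right_le (f' := f) (ε := 0)
      (fun u hu => (hF u (hsub hu)).continuousAt.continuousWithinAt)
      (fun u hu _ hr => (hF u (hsub (Ico_subset_Icc_self hu))).hasDerivWithinAt.liminf_right_slope_le hr)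
      le_rfl (fun u hu => by simpa using hf u (hsub (Ico_subset_Icc_self hu)))
      b ⟨hc.2.le, le_rfl⟩
    rwa [gronwallBound_ε0] at this
  have hlim : Tendsto (fun c => F c * Real.exp (k * (b - c))) (𝓝[>] a) (𝓝 0) := by
    have hexp : Continuous fun c => Real.exp (k * (b - c)) := by fun_prop
    simpa using hF0.mul ((hexp.tendsto a).mono_left nhdsWithin_le_nhds)
  exact ge_of_tendsto hlim <| Filter.mem_of_superset (Ioo_mem_nhdsGT hab) hgronwall

theorem stmt_6_general (M : EReal) (hM0 : 0 < M)
    (f : ℝ → ℝ)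
    (hf_cont : ContinuousOn f {t : ℝ | 0 < t ∧ (t : EReal) < M})
    (hf_pos : ∀ t : ℝ, 0 < t → (t : EReal) < M → 0 < f t)
    (hint : ∀ t : ℝ, 0 < t → (t : EReal) < M → IntervalIntegrable f MeasureTheory.volume 0 t)
    (F : ℝ → ℝ) (hF : ∀ t : ℝ, 0 < t → (t : EReal) < M → F t = ∫ τ in (0:ℝ)..t, f τ)
    (hF0 : Tendsto F (nhdsWithin 0 (Set.Ioi 0)) (nhds 0))
    (hFf : ConvexOn ℝ {t : ℝ | 0 < t ∧ (t : EReal) < M} (fun t => F t / f t)) :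
    Tendsto (fun t => F t / f t) (nhdsWithin 0 (Set.Ioi 0)) (nhds 0) := by
  set S := {t : ℝ | 0 < t ∧ (t : EReal) < M}
  have hS_open : IsOpen S := by
    convert (isOpen_Ioo (a := (0 : EReal)) (b := M)).preimage continuous_coe_real_ereal using 1
    ext t; simp [S, EReal.coe_pos]
  obtain ⟨b, hb0, hbM⟩ := EReal.exists_between_coe_real hM0
  have hb : 0 < b := EReal.coe_pos.1 hb0
  have hIoc : Ioc 0 b ⊆ S := fun t ht => ⟨ht.1, (EReal.coe_le_coe_iff.2 ht.2).trans_lt hbM⟩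
  have hF_pos : ∀ t ∈ S, 0 < F t := fun t ht => by
    rw [hF t ht.1 ht.2]
    exact intervalIntegral_pos_of_pos_on (hint t ht.1 ht.2)
      (fun u hu => hf_pos u hu.1 ((EReal.coe_lt_coe_iff.2 hu.2).trans ht.2)) ht.1
  have hF_deriv : ∀ t ∈ S, HasDerivAt F (f t) t := fun t ht => by
    refine (integral_hasDerivAt_right (hint t ht.1 ht.2)
      (hf_cont.stronglyMeasurableAtFilter hS_open t ht)
      (hf_cont.continuousAt (hS_open.mem_nhds ht))).congr_of_eventuallyEq ?_
    filter_upwards [hS_open.mem_nhds ht] with u hu using hF u hu.1 hu.2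
  have hg_nonneg : ∀ t ∈ Ioc 0 b, 0 ≤ F t / f t := fun t ht =>
    (div_pos (hF_pos t (hIoc ht)) (hf_pos t (hIoc ht).1 (hIoc ht).2)).le
  refine ((hFf.subset hIoc (convex_Ioc 0 b)).tendsto_nhdsGT_or_exists_pos_le hb
    hg_nonneg).resolve_right ?_
  rintro ⟨ε, hε, t₀, ht₀, hε_le⟩
  have hsub : Ioc 0 t₀ ⊆ S := fun u hu => hIoc ⟨hu.1, hu.2.trans ht₀.2⟩
  have hf_le : ∀ u ∈ Ioc 0 t₀, f u ≤ ε⁻¹ * F u := fun u hu => by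
    rw [le_inv_mul_iff₀ hε, ← le_div_iff₀ (hf_pos u (hsub hu).1 (hsub hu).2)]
    exact hε_le u hu
  exact (hF_pos t₀ (hIoc ht₀)).not_ge <| nonpos_of_deriv_le_mul_of_tendsto_zero ht₀.1
    (fun u hu => hF_deriv u (hsub hu)) hf_le hF0

/-- Let `p > 1`, `M ∈ (0,∞]` (as an `EReal`), and `f : (0,M) → (0,∞)`
continuous, such that `F t = ∫ τ in 0..t, f τ` is finite for each `t ∈ (0,M)`.
Suppose `F^{1/p}` is concave on `(0,M)` with `F(0⁺) = 0` and `F/f` convex on `(0,M)`.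
Then `F t / f t → 0` as `t → 0⁺`. -/
theorem stmt_6 (p : ℝ) (hp : 1 < p) (M : EReal) (hM0 : 0 < M)
    (f : ℝ → ℝ)
    (hf_cont : ContinuousOn f {t : ℝ | 0 < t ∧ (t : EReal) < M})
    (hf_pos : ∀ t : ℝ, 0 < t → (t : EReal) < M → 0 < f t)
    (hint : ∀ t : ℝ, 0 < t → (t : EReal) < M → IntervalIntegrable f MeasureTheory.volume 0 t)
    (F : ℝ → ℝ) (hF : ∀ t : ℝ, 0 < t → (t : EReal) < M → F t = ∫ τ in (0:ℝ)..t, f τ)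
    (hF0 : Tendsto F (nhdsWithin 0 (Set.Ioi 0)) (nhds 0))
    (hFconc : ConcaveOn ℝ {t : ℝ | 0 < t ∧ (t : EReal) < M} (fun t => F t ^ (1 / p)))
    (hFf : ConvexOn ℝ {t : ℝ | 0 < t ∧ (t : EReal) < M} (fun t => F t / f t)) :
    Tendsto (fun t => F t / f t) (nhdsWithin 0 (Set.Ioi 0)) (nhds 0) :=
  stmt_6_general M hM0 f hf_cont hf_pos hint F hF hF0 hFf
end

section
/- Let p ≥ 1, let f : [0, ∞) → [0, ∞) be continuous, and set F(t) = ∫₀^t f(τ) dτ. If t ↦ F(t)^{1/p} is concave on [0, ∞), then there exists a constant C > 0 such that f(t) ≤ C · (1 + t^{p-1}) for all t ≥ 0. -/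
/-!
Since `φ = F ^ (1 / p)` is concave with `φ 0 = 0`, the ratio `φ t / t` is nonincreasing, i.e.
`F u / u ^ p ≤ F t / t ^ p` for `0 < t ≤ u`. Hence to the right of `t` the graph of `F` lies below
`u ↦ F t * (u / t) ^ p`, which touches it at `t`; comparing derivatives there gives
`f t ≤ p * F t / t ≤ p * F 1 * t ^ (p - 1)` for `t ≥ 1`. On `[0, 1]`, `f` is bounded by compactness.
-/

open Set Filter Topology

lemma ConcaveOn.mul_le_mul_of_map_zero {𝕜 : Type*} [Field 𝕜] [LinearOrder 𝕜]
    [IsStrictOrderedRing 𝕜] {φ : 𝕜 → 𝕜} (hφ : ConcaveOn 𝕜 (Ici 0) φ) (h0 : φ 0 = 0) {t u : 𝕜}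
    (ht : 0 < t) (htu : t ≤ u) : t * φ u ≤ u * φ t := by
  rcases htu.eq_or_lt with rfl | htu
  · rfl
  have hslope := hφ.slope_anti_adjacent self_mem_Ici (ht.trans htu).le ht htu
  rw [h0, sub_zero, sub_zero, div_le_div_iff₀ (sub_pos.2 htu) ht] at hslope
  linarith

lemma rpow_mul_le_rpow_mul_of_concaveOn_rpow_inv {F : ℝ → ℝ} {p : ℝ} (hp : 0 < p)
    (hF0 : F 0 = 0) (hF_nonneg : ∀ t, 0 ≤ t → 0 ≤ F t)
    (hconc : ConcaveOn ℝ (Ici 0) fun t => F t ^ (1 / p)) {t u : ℝ} (ht : 0 < t) (htu : t ≤ u) :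
    t ^ p * F u ≤ u ^ p * F t := by
  have hu : 0 ≤ u := ht.le.trans htu
  have hroot : ∀ s, 0 ≤ s → (F s ^ (1 / p)) ^ p = F s := fun s hs => by
    rw [← Real.rpow_mul (hF_nonneg s hs), one_div_mul_cancel hp.ne', Real.rpow_one]
  have key := hconc.mul_le_mul_of_map_zero (by simp [hF0, hp.ne']) ht htu
  have hu' := Real.rpow_nonneg (hF_nonneg u hu) (1 / p)
  have ht' := Real.rpow_nonneg (hF_nonneg t ht.le) (1 / p)
  calc t ^ p * F u = (t * F u ^ (1 / p)) ^ p := by rw [Real.mul_rpow ht.le hu', hroot u hu]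
    _ ≤ (u * F t ^ (1 / p)) ^ p := Real.rpow_le_rpow (by positivity) key hp.le
    _ = u ^ p * F t := by rw [Real.mul_rpow hu ht', hroot t ht.le]

lemma HasDerivAt.le_of_eventuallyLE_nhdsGT {f g : ℝ → ℝ} {f' g' x : ℝ} (hf : HasDerivAt f f' x)
    (hg : HasDerivAt g g' x) (hfg : f x = g x) (hle : f ≤ᶠ[𝓝[>] x] g) : f' ≤ g' := by
  have hslope : ∀ {h : ℝ → ℝ} {h' : ℝ}, HasDerivAt h h' x →
      Tendsto (slope h x) (𝓝[>] x) (𝓝 h') := fun hh =>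
    (hasDerivWithinAt_iff_tendsto_slope' (lt_irrefl x)).1 hh.hasDerivWithinAt
  refine le_of_tendsto_of_tendsto (hslope hf) (hslope hg) ?_
  filter_upwards [hle, self_mem_nhdsWithin] with y hy hxy
  rw [slope_def_field, slope_def_field, hfg]
  exact div_le_div_of_nonneg_right (by linarith) (sub_pos.2 hxy).le

lemma HasDerivAt.le_mul_div_of_rpow_mul_le {F : ℝ → ℝ} {F' p t : ℝ} (hF : HasDerivAt F F' t)
    (ht : 0 < t) (hgrowth : ∀ u ≥ t, t ^ p * F u ≤ u ^ p * F t) : F' ≤ p * F t / t := by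
  have htp : 0 < t ^ p := Real.rpow_pos_of_pos ht p
  set c := F t / t ^ p with hc
  have hpow : HasDerivAt (fun u => c * u ^ p) (c * (p * t ^ (p - 1))) t :=
    (Real.hasDerivAt_rpow_const (Or.inl ht.ne')).const_mul c
  have hcmp := hF.le_of_eventuallyLE_nhdsGT hpow (div_mul_cancel₀ (F t) htp.ne').symm <| by
    filter_upwards [self_mem_nhdsWithin] with u hu
    rw [div_mul_eq_mul_div, le_div_iff₀ htp]
    linarith [hgrowth u (le_of_lt hu)]
  calc F' ≤ c * (p * t ^ (p - 1)) := hcmp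
    _ = p * F t / t := by rw [Real.rpow_sub_one ht.ne', hc]; field_simp

/-- Let `p ≥ 1`, `f : [0,∞) → [0,∞)` continuous, and `F t = ∫ τ in 0..t, f τ`.
If `t ↦ F t ^ (1/p)` is concave on `[0,∞)`, then there is `C > 0` with
`f t ≤ C * (1 + t ^ (p-1))` for all `t ≥ 0`. -/
theorem stmt_8 (p : ℝ) (hp : 1 ≤ p) (f : ℝ → ℝ)
    (hf_cont : ContinuousOn f (Set.Ici 0))
    (hf_nonneg : ∀ t ∈ Set.Ici (0:ℝ), 0 ≤ f t)
    (F : ℝ → ℝ) (hF : ∀ t, F t = ∫ τ in (0:ℝ)..t, f τ)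
    (hFconc : ConcaveOn ℝ (Set.Ici 0) (fun t => F t ^ (1 / p))) :
    ∃ C > (0:ℝ), ∀ t ≥ (0:ℝ), f t ≤ C * (1 + t ^ (p - 1)) := by
  have hp0 : 0 < p := by linarith
  have hF0 : F 0 = 0 := by simp [hF]
  have hF_nonneg (t : ℝ) (ht : 0 ≤ t) : 0 ≤ F t := by
    rw [hF]; exact intervalIntegral.integral_nonneg ht fun u hu => hf_nonneg u hu.1
  have hF_deriv (t : ℝ) (ht : 0 < t) : HasDerivAt F (f t) t := by
    have hf_pos : ContinuousOn f (Ioi 0) := hf_cont.mono Ioi_subset_Ici_self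
    rw [funext hF]
    exact intervalIntegral.integral_hasDerivAt_right
      ((hf_cont.mono Icc_subset_Ici_self).intervalIntegrable_of_Icc ht.le)
      (hf_pos.stronglyMeasurableAtFilter isOpen_Ioi t ht) (hf_pos.continuousAt (Ioi_mem_nhds ht))
  have hgrowth {t u : ℝ} (ht : 0 < t) (htu : t ≤ u) : t ^ p * F u ≤ u ^ p * F t :=
    rpow_mul_le_rpow_mul_of_concaveOn_rpow_inv hp0 hF0 hF_nonneg hFconc ht htu
  have hlarge (t : ℝ) (ht : 1 ≤ t) : f t ≤ p * F 1 * t ^ (p - 1) := by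
    have ht0 : 0 < t := one_pos.trans_le ht
    have hFt : F t ≤ t ^ p * F 1 := by simpa using hgrowth one_pos ht
    calc f t ≤ p * F t / t := (hF_deriv t ht0).le_mul_div_of_rpow_mul_le ht0 fun _ => hgrowth ht0
      _ ≤ p * (t ^ p * F 1) / t := by gcongr
      _ = p * F 1 * t ^ (p - 1) := by rw [Real.rpow_sub_one ht0.ne']; ring
  obtain ⟨M, hM⟩ := isCompact_Icc.exists_bound_of_continuousOn
    (hf_cont.mono (Icc_subset_Ici_self : Icc (0 : ℝ) 1 ⊆ Ici 0))
  have hM0 : 0 ≤ M := (norm_nonneg _).trans (hM 0 ⟨le_rfl, zero_le_one⟩)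
  have hK0 : 0 ≤ p * F 1 := mul_nonneg hp0.le (hF_nonneg 1 zero_le_one)
  refine ⟨M + p * F 1 + 1, by positivity, fun t ht => ?_⟩
  have htp : 0 ≤ t ^ (p - 1) := Real.rpow_nonneg ht _
  rcases le_total t 1 with ht1 | ht1
  · have hft : f t ≤ M := (le_abs_self _).trans (hM t ⟨ht, ht1⟩)
    nlinarith
  · nlinarith [hlarge t ht1]
end

section
/- Let F(t) = t · log(1 + t) for t ≥ 0. Then the function t ↦ F(t)^{1/2} is concave on [0, ∞). -/
/-! The function is `√(t · log (1 + t))`, the geometric mean of the two nonnegative concave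
functions `t` and `log (1 + t)`. The geometric mean of nonnegative concave functions is concave:
by the two-term Cauchy–Schwarz inequality
`√(a f x · a g x) + √(b f y · b g y) ≤ √((a f x + b f y) (a g x + b g y))`,
and by concavity of `f` and `g` the right-hand side is at most `√(f z · g z)` for
`z = a x + b y`. -/

open Real

theorem Real.sqrt_mul_add_sqrt_mul_le {p q r s : ℝ} (hp : 0 ≤ p) (hq : 0 ≤ q) (hr : 0 ≤ r)
    (hs : 0 ≤ s) : √(p * r) + √(q * s) ≤ √((p + q) * (r + s)) := by
  have h := Real.sum_sqrt_mul_sqrt_le Finset.univ (f := ![p, q]) (g := ![r, s])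
    (Fin.forall_fin_two.2 ⟨hp, hq⟩) (Fin.forall_fin_two.2 ⟨hr, hs⟩)
  simp only [Fin.sum_univ_two, Matrix.cons_val_zero, Matrix.cons_val_one] at h
  rwa [sqrt_mul hp, sqrt_mul hq, sqrt_mul (add_nonneg hp hq)]

theorem ConcaveOn.sqrt_mul {E : Type*} [AddCommGroup E] [Module ℝ E] {s : Set E} {f g : E → ℝ}
    (hf : ConcaveOn ℝ s f) (hg : ConcaveOn ℝ s g) (hf₀ : ∀ x ∈ s, 0 ≤ f x)
    (hg₀ : ∀ x ∈ s, 0 ≤ g x) : ConcaveOn ℝ s fun x => √(f x * g x) := by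
  refine ⟨hf.1, fun x hx y hy a b ha hb hab => ?_⟩
  have hscale : ∀ c u v : ℝ, 0 ≤ c → c * √(u * v) = √((c * u) * (c * v)) :=
    fun c u v hc => by
      rw [show c * u * (c * v) = c ^ 2 * (u * v) by ring, Real.sqrt_mul (sq_nonneg c),
        Real.sqrt_sq hc]
  have hfx := hf₀ x hx
  have hgx := hg₀ x hx
  have hfy := hf₀ y hy
  have hgy := hg₀ y hy
  simp only [smul_eq_mul]
  calc a * √(f x * g x) + b * √(f y * g y)
      = √((a * f x) * (a * g x)) + √((b * f y) * (b * g y)) := by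
        rw [hscale a _ _ ha, hscale b _ _ hb]
    _ ≤ √((a * f x + b * f y) * (a * g x + b * g y)) :=
        Real.sqrt_mul_add_sqrt_mul_le (by positivity) (by positivity) (by positivity)
          (by positivity)
    _ ≤ √(f (a • x + b • y) * g (a • x + b • y)) :=
        Real.sqrt_le_sqrt (mul_le_mul (hf.2 hx hy ha hb hab) (hg.2 hx hy ha hb hab)
          (by positivity) (hf₀ _ (hf.1 hx hy ha hb hab)))

theorem concaveOn_log_one_add : ConcaveOn ℝ (Set.Ici 0) fun t : ℝ => log (1 + t) := by
  refine (strictConcaveOn_log_Ioi.concaveOn.translate_right 1).subset ?_ (convex_Ici 0)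
  intro t (ht : 0 ≤ t)
  show 0 < 1 + t
  linarith

/-- For `F t = t * log (1 + t)`, the function `t ↦ F t ^ (1/2)` is concave
on `[0,∞)`. -/
theorem stmt_9 :
    ConcaveOn ℝ (Set.Ici 0) (fun t : ℝ => (t * Real.log (1 + t)) ^ ((1:ℝ) / 2)) := by
  simp only [← Real.sqrt_eq_rpow]
  exact (concaveOn_id (convex_Ici 0)).sqrt_mul concaveOn_log_one_add (fun t ht => ht)
    (fun t (ht : 0 ≤ t) => log_nonneg (by linarith))
end

section
/- Let F(t) = t · log(1 + t) and f(t) = F'(t) = log(1 + t) + t/(1 + t) for t > 0. Then the function t ↦ F(t)/f(t) is convex on (0, ∞). -/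
/-!
Write `l = log (1 + t)` and `D t = (1 + t) l + t = (1 + t) f t`. Then `F / f = t (1 + t) l / D`,
`(F / f)' = 1 - t (2 + t) l / D²` and `(F / f)'' = P / ((1 + t) D³)` with
`P = t (1 + t) (4 + t) l - 2 (1 + t) l² - t² (2 + t)`.
As a function of `l`, `P = 2 (1 + t) l (t - l) + t (2 + t) ((1 + t) l - t)`, and both terms are
nonnegative by the elementary bounds `t / (1 + t) ≤ log (1 + t) ≤ t`.
-/

open Real

namespace Real

lemma log_one_add_le_self {x : ℝ} (hx : -1 < x) : log (1 + x) ≤ x := by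
  linarith [log_le_sub_one_of_pos (by linarith : 0 < 1 + x)]

lemma le_one_add_mul_log_one_add {x : ℝ} (hx : -1 < x) : x ≤ (1 + x) * log (1 + x) := by
  have h : 0 < 1 + x := by linarith
  have := mul_le_mul_of_nonneg_left (one_sub_inv_le_log_of_pos h) h.le
  rwa [mul_sub, mul_one, mul_inv_cancel₀ h.ne', add_sub_cancel_left] at this

lemma hasDerivAt_log_one_add {x : ℝ} (hx : -1 < x) :
    HasDerivAt (fun t => log (1 + t)) (1 + x)⁻¹ x := by
  simpa [one_div] using ((hasDerivAt_id x).const_add 1).log (by linarith : (0 : ℝ) < 1 + x).ne'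

end Real

namespace RatioConvexity

/-- `(1 + t) * f t`, the derivative `f t = log (1 + t) + t / (1 + t)` with its fraction cleared. -/
noncomputable def scaledDeriv (t : ℝ) : ℝ := (1 + t) * log (1 + t) + t

lemma scaledDeriv_pos {t : ℝ} (ht : 0 < t) : 0 < scaledDeriv t := by
  have := mul_pos (by linarith : (0 : ℝ) < 1 + t) (log_pos (by linarith : (1 : ℝ) < 1 + t))
  unfold scaledDeriv; linarith

lemma hasDerivAt_scaledDeriv {t : ℝ} (ht : -1 < t) :
    HasDerivAt scaledDeriv (log (1 + t) + 2) t := by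
  have h : HasDerivAt scaledDeriv (1 * log (1 + t) + (1 + t) * (1 + t)⁻¹ + 1) t :=
    (((hasDerivAt_id t).const_add 1).mul (hasDerivAt_log_one_add ht)).add (hasDerivAt_id t)
  rwa [mul_inv_cancel₀ (by linarith : (0 : ℝ) < 1 + t).ne', one_mul, add_assoc, one_add_one_eq_two]
    at h

lemma log_one_add_add_div_eq {t : ℝ} (ht : -1 < t) :
    log (1 + t) + t / (1 + t) = scaledDeriv t / (1 + t) := by
  have : 1 + t ≠ 0 := (by linarith : (0 : ℝ) < 1 + t).ne'
  field_simp
  rw [scaledDeriv]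

lemma hasDerivAt_ratio {t : ℝ} (ht : 0 < t) :
    HasDerivAt (fun t => t * log (1 + t) / (log (1 + t) + t / (1 + t)))
      (1 - t * (2 + t) * log (1 + t) / scaledDeriv t ^ 2) t := by
  have h1 : (0 : ℝ) < 1 + t := by linarith
  have hD := (scaledDeriv_pos ht).ne'
  have hF := (hasDerivAt_id t).mul (hasDerivAt_log_one_add (by linarith : -1 < t))
  have hf := (hasDerivAt_log_one_add (by linarith : -1 < t)).add
    ((hasDerivAt_id t).div ((hasDerivAt_id t).const_add 1) h1.ne')
  have hf0 : log (1 + t) + t / (1 + t) ≠ 0 := by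
    rw [log_one_add_add_div_eq (by linarith)]; positivity
  refine (hF.div hf hf0).congr_deriv ?_
  simp only [Pi.mul_apply, Pi.add_apply, Pi.div_apply, id, one_mul, mul_one]
  rw [log_one_add_add_div_eq (by linarith)]
  field_simp
  rw [scaledDeriv]
  ring

lemma hasDerivAt_ratio_deriv {t : ℝ} (ht : 0 < t) :
    HasDerivAt (fun t => 1 - t * (2 + t) * log (1 + t) / scaledDeriv t ^ 2)
      ((t * (1 + t) * (4 + t) * log (1 + t) - 2 * (1 + t) * log (1 + t) ^ 2 - t ^ 2 * (2 + t))
        / ((1 + t) * scaledDeriv t ^ 3)) t := by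
  have h1 : (0 : ℝ) < 1 + t := by linarith
  have hD := (scaledDeriv_pos ht).ne'
  have hN := ((hasDerivAt_id t).mul ((hasDerivAt_id t).const_add 2)).mul
    (hasDerivAt_log_one_add (by linarith : -1 < t))
  have hD2 := (hasDerivAt_scaledDeriv (by linarith : -1 < t)).pow 2
  refine ((hasDerivAt_const t 1).sub (hN.div hD2 (pow_ne_zero 2 hD))).congr_deriv ?_
  simp only [Pi.mul_apply, Pi.pow_apply, id, one_mul, mul_one]
  field_simp
  rw [scaledDeriv]
  ring

lemma secondDerivNumerator_nonneg {x l : ℝ} (hx : 0 ≤ x) (hl : 0 ≤ l) (hlx : l ≤ x)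
    (hxl : x ≤ (1 + x) * l) :
    0 ≤ x * (1 + x) * (4 + x) * l - 2 * (1 + x) * l ^ 2 - x ^ 2 * (2 + x) := by
  have h : x * (1 + x) * (4 + x) * l - 2 * (1 + x) * l ^ 2 - x ^ 2 * (2 + x)
      = 2 * (1 + x) * l * (x - l) + x * (2 + x) * ((1 + x) * l - x) := by ring
  rw [h]
  have := sub_nonneg.2 hlx
  have := sub_nonneg.2 hxl
  positivity

end RatioConvexity

/-- For `F t = t * log (1 + t)` and `f t = F' t = log (1 + t) + t / (1 + t)`,
the function `t ↦ F t / f t` is convex on `(0,∞)`. -/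
theorem stmt_10 :
    ConvexOn ℝ (Set.Ioi 0)
      (fun t : ℝ => (t * Real.log (1 + t)) / (Real.log (1 + t) + t / (1 + t))) := by
  open RatioConvexity in
  refine convexOn_of_hasDerivWithinAt2_nonneg (convex_Ioi 0)
    (fun t ht => (hasDerivAt_ratio ht).continuousAt.continuousWithinAt)
    (fun t ht => (hasDerivAt_ratio (interior_Ioi.subset ht)).hasDerivWithinAt)
    (fun t ht => (hasDerivAt_ratio_deriv (interior_Ioi.subset ht)).hasDerivWithinAt) ?_
  rw [interior_Ioi]
  intro t (ht : 0 < t)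
  have hl := log_pos (by linarith : (1 : ℝ) < 1 + t)
  have := scaledDeriv_pos ht
  exact div_nonneg (secondDerivNumerator_nonneg ht.le hl.le (log_one_add_le_self (by linarith))
    (le_one_add_mul_log_one_add (by linarith))) (by positivity)
end

section
/- Let F(t) = (t + 1) · log(t + 1) − t for t ≥ 0 (the logarithmic entropy function). Then the function t ↦ F(t)^{1/2} is concave on [0, ∞). -/
/-!
Since `F' t = log (t + 1)` and `F'' t = (t + 1)⁻¹`, concavity of `√F` reduces to
`2 F F'' ≤ F'²`, i.e. `2 F t ≤ (t + 1) log² (t + 1)`. The difference of the two sides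
vanishes at `0` and has derivative `log² (t + 1) ≥ 0`.
-/

open Real Set

/-- `(√g)'' = (2 g g'' - g'²) / (4 g √g)`. -/
theorem concaveOn_sqrt_of_two_mul_mul_deriv2_le_sq {D : Set ℝ} (hD : Convex ℝ D)
    {g g' g'' : ℝ → ℝ} (hg_cont : ContinuousOn g D) (hg_pos : ∀ x ∈ interior D, 0 < g x)
    (hg : ∀ x ∈ interior D, HasDerivAt g (g' x) x)
    (hg' : ∀ x ∈ interior D, HasDerivAt g' (g'' x) x)
    (hle : ∀ x ∈ interior D, 2 * g x * g'' x ≤ g' x ^ 2) :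
    ConcaveOn ℝ D (fun x => √(g x)) := by
  refine concaveOn_of_hasDerivWithinAt2_nonpos hD (f' := fun x => g' x / (2 * √(g x)))
    (f'' := fun x => (2 * g x * g'' x - g' x ^ 2) / (4 * g x * √(g x)))
    (continuous_sqrt.comp_continuousOn hg_cont)
    (fun x hx => ((hg x hx).sqrt (hg_pos x hx).ne').hasDerivWithinAt) (fun x hx => ?_)
    (fun x hx => div_nonpos_of_nonpos_of_nonneg (by linarith [hle x hx]) (by
      have := hg_pos x hx; positivity))
  have hgx := hg_pos x hx
  refine (((hg' x hx).div (((hg x hx).sqrt hgx.ne').const_mul 2) (by positivity)).congr_deriv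
    ?_).hasDerivWithinAt
  have hsq : √(g x) ^ 2 = g x := sq_sqrt hgx.le
  field_simp
  rw [hsq]
  ring

noncomputable def logEntropy (t : ℝ) : ℝ := (t + 1) * log (t + 1) - t

theorem hasDerivAt_log_add_one {t : ℝ} (ht : t + 1 ≠ 0) :
    HasDerivAt (fun t => log (t + 1)) (t + 1)⁻¹ t := by
  simpa [one_div] using ((hasDerivAt_id' t).add_const 1).log ht

theorem hasDerivAt_logEntropy {t : ℝ} (ht : t + 1 ≠ 0) :
    HasDerivAt logEntropy (log (t + 1)) t := by
  refine ((((hasDerivAt_id' t).add_const 1).mul (hasDerivAt_log_add_one ht)).sub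
    (hasDerivAt_id' t)).congr_deriv ?_
  field_simp
  ring

theorem logEntropy_pos {t : ℝ} (ht : 0 < t) : 0 < logEntropy t := by
  have ht1 : 0 < t + 1 := by linarith
  have h := log_lt_sub_one_of_pos (inv_pos.mpr ht1) (inv_ne_one.mpr (by linarith))
  rw [log_inv, ← mul_lt_mul_iff_of_pos_left ht1, mul_sub, mul_inv_cancel₀ ht1.ne'] at h
  unfold logEntropy
  linarith

theorem two_mul_logEntropy_le {t : ℝ} (ht : 0 ≤ t) :
    2 * logEntropy t ≤ (t + 1) * log (t + 1) ^ 2 := by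
  let h : ℝ → ℝ := fun s => (s + 1) * log (s + 1) ^ 2 - 2 * logEntropy s
  have hderiv : ∀ s ∈ Ici (0 : ℝ), HasDerivAt h (log (s + 1) ^ 2) s := by
    intro s hs
    have hs1 : s + 1 ≠ 0 := by simp only [mem_Ici] at hs; linarith
    refine ((((hasDerivAt_id' s).add_const 1).mul ((hasDerivAt_log_add_one hs1).fun_pow 2)).sub
      ((hasDerivAt_logEntropy hs1).const_mul 2)).congr_deriv ?_
    field_simp
    ring
  have hmono : MonotoneOn h (Ici 0) :=
    monotoneOn_of_hasDerivWithinAt_nonneg (convex_Ici 0)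
      (fun s hs => (hderiv s hs).continuousAt.continuousWithinAt)
      (fun s hs => (hderiv s (interior_subset hs)).hasDerivWithinAt)
      (fun s _ => sq_nonneg _)
  simpa [h, logEntropy, sub_nonneg] using hmono self_mem_Ici ht ht

/-- For the logarithmic entropy `F t = (t + 1) * log (t + 1) - t`,
the function `t ↦ F t ^ (1/2)` is concave on `[0,∞)`. -/
theorem stmt_11 :
    ConcaveOn ℝ (Set.Ici 0)
      (fun t : ℝ => ((t + 1) * Real.log (t + 1) - t) ^ ((1:ℝ) / 2)) := by
  have hne : ∀ t ∈ Ici (0 : ℝ), t + 1 ≠ 0 := fun t ht => by simp only [mem_Ici] at ht; linarith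
  simp only [← sqrt_eq_rpow]
  refine concaveOn_sqrt_of_two_mul_mul_deriv2_le_sq (g := logEntropy) (convex_Ici 0)
    (fun t ht => (hasDerivAt_logEntropy (hne t ht)).continuousAt.continuousWithinAt) ?_
    (fun t ht => hasDerivAt_logEntropy (hne t (interior_subset ht)))
    (fun t ht => hasDerivAt_log_add_one (hne t (interior_subset ht))) ?_
  all_goals simp only [interior_Ici, mem_Ioi]
  · exact fun t ht => logEntropy_pos ht
  · intro t ht
    rw [mul_inv_le_iff₀ (by positivity)]
    exact (two_mul_logEntropy_le ht.le).trans_eq (mul_comm _ _)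
end

section
/- For all t ≥ 0 it holds that 2t + (t + 1) · (log(t + 1) − 2) · log(t + 1) ≥ 0. -/
/-!
Put `u = log (t + 1) ≥ 0`, so that `t + 1 = exp u` and the expression equals
`exp u * (u ^ 2 - 2 * u + 2) - 2`. Since `u ^ 2 - 2 * u + 2 > 0`, the quadratic lower bound
`1 + u + u ^ 2 / 2 ≤ exp u` reduces this to `(1 + u + u ^ 2 / 2) * (u ^ 2 - 2 * u + 2) - 2 = u ^ 4 / 2`.
-/

open Real

theorem two_le_exp_mul_sq_sub_two_mul_add_two {u : ℝ} (hu : 0 ≤ u) :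
    2 ≤ exp u * (u ^ 2 - 2 * u + 2) := by
  have hquad : 0 < u ^ 2 - 2 * u + 2 := by nlinarith [sq_nonneg (u - 1)]
  calc 2 ≤ 2 + u ^ 4 / 2 := le_add_of_nonneg_right (by positivity)
    _ = (1 + u + u ^ 2 / 2) * (u ^ 2 - 2 * u + 2) := by ring
    _ ≤ exp u * (u ^ 2 - 2 * u + 2) := by gcongr; exact quadratic_le_exp_of_nonneg hu

/-- For all `t ≥ 0`, `2t + (t + 1)(log(t + 1) - 2) log(t + 1) ≥ 0`. -/
theorem stmt_12 :
    ∀ t : ℝ, 0 ≤ t →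
      0 ≤ 2 * t + (t + 1) * (Real.log (t + 1) - 2) * Real.log (t + 1) := by
  intro t ht
  have hexp : exp (log (t + 1)) = t + 1 := exp_log (by linarith)
  have hbound := two_le_exp_mul_sq_sub_two_mul_add_two (log_nonneg (by linarith : (1 : ℝ) ≤ t + 1))
  rw [hexp] at hbound
  linarith
end

section
/- Let F(t) = (t + 1) · log(t + 1) − t and f(t) = F'(t) = log(t + 1) for t > 0. Then the function t ↦ F(t)/f(t) is convex on (0, ∞). -/
/-!
Since `F t / f t = t + 1 - t / log (t + 1)`, it suffices that `h t = t / log (t + 1)` is concave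
on `(0, ∞)`. A direct computation gives
`h'' t = -((t + 2) log (t + 1) - 2 t) / ((t + 1)² log (t + 1)³)`,
which is nonpositive by the classical bound `2 t / (t + 2) ≤ log (1 + t)`.
-/

open Real Set

lemma hasDerivAt_div_log_add_one {x : ℝ} (hx : 0 < x) :
    HasDerivAt (fun t => t / log (t + 1))
      ((log (x + 1) - x / (x + 1)) / log (x + 1) ^ 2) x := by
  have hL : log (x + 1) ≠ 0 := (log_pos (by linarith)).ne'
  have hlog := ((hasDerivAt_id' x).add_const 1).log (by positivity)
  refine ((hasDerivAt_id' x).div hlog hL).congr_deriv ?_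
  ring

lemma hasDerivAt_deriv_div_log_add_one {x : ℝ} (hx : 0 < x) :
    HasDerivAt (fun t => (log (t + 1) - t / (t + 1)) / log (t + 1) ^ 2)
      (-((x + 2) * log (x + 1) - 2 * x) / ((x + 1) ^ 2 * log (x + 1) ^ 3)) x := by
  have hx1 : x + 1 ≠ 0 := by positivity
  have hL : log (x + 1) ≠ 0 := (log_pos (by linarith)).ne'
  have hshift := (hasDerivAt_id' x).add_const 1
  have hlog := hshift.log hx1
  have hnum := hlog.sub ((hasDerivAt_id' x).div hshift hx1)
  refine (hnum.div (hlog.pow 2) (pow_ne_zero 2 hL)).congr_deriv ?_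
  simp only [Pi.sub_apply, Pi.div_apply, Pi.pow_apply]
  field_simp
  ring

lemma concaveOn_div_log_add_one : ConcaveOn ℝ (Ioi 0) fun t : ℝ => t / log (t + 1) := by
  refine concaveOn_of_hasDerivWithinAt2_nonpos (convex_Ioi 0)
    (fun x hx => (hasDerivAt_div_log_add_one hx).continuousAt.continuousWithinAt)
    (fun x hx => (hasDerivAt_div_log_add_one (interior_subset hx)).hasDerivWithinAt)
    (fun x hx => (hasDerivAt_deriv_div_log_add_one (interior_subset hx)).hasDerivWithinAt) ?_
  intro x hx
  have hx : 0 < x := interior_subset hx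
  have hlog : 2 * x ≤ (x + 2) * log (x + 1) := by
    have := le_log_one_add_of_nonneg hx.le
    rw [div_le_iff₀ (by positivity), add_comm 1 x] at this
    linarith
  have hL : 0 < log (x + 1) := log_pos (by linarith)
  exact div_nonpos_of_nonpos_of_nonneg (by linarith) (by positivity)

/-- For `F t = (t + 1) * log (t + 1) - t` and `f t = F' t = log (t + 1)`,
the function `t ↦ F t / f t` is convex on `(0,∞)`. -/
theorem stmt_13 :
    ConvexOn ℝ (Set.Ioi 0)
      (fun t : ℝ => ((t + 1) * Real.log (t + 1) - t) / Real.log (t + 1)) := by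
  have hlin : ConvexOn ℝ (Ioi 0) fun t : ℝ => t + 1 := (convexOn_id (convex_Ioi 0)).add_const 1
  refine (hlin.sub concaveOn_div_log_add_one).congr fun t (ht : 0 < t) => ?_
  have hL : log (t + 1) ≠ 0 := (log_pos (by linarith)).ne'
  simp only [Pi.sub_apply]
  field_simp
end

section
/- Let p > 1 and ε > 0, and define h(t) = p + ((p − 1)t − ε) · (ε + t)^{(p−2)/2} for t ≥ 0. Then h is non-decreasing on [0, ∞); consequently h(t) ≥ h(0) = p − ε^{p/2} for all t ≥ 0, and in particular h(t) > 0 for all t ≥ 0 whenever ε < p^{2/p}. -/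
/-!
Writing `c = (p - 2) / 2`, the derivative of `h` factors as
`h' t = (p / 2) (ε + t) ^ (c - 1) (ε + (p - 1) t)`, which is nonnegative for `t ≥ 0` as soon as
`p ≥ 1`. Hence `h` is monotone on `[0, ∞)` and bounded below by `h 0 = p - ε ^ (p / 2)`, which is
positive exactly when `ε < p ^ (2 / p)`.
-/

open Set

noncomputable section

/-- The factor `b(∇v)` of the transformed equation, as a function of `t = |∇v|²`. -/
def gradientFactor (p ε t : ℝ) : ℝ :=
  p + ((p - 1) * t - ε) * (ε + t) ^ ((p - 2) / 2)

variable {p ε t : ℝ}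

theorem hasDerivAt_gradientFactor (p : ℝ) (hεt : 0 < ε + t) :
    HasDerivAt (gradientFactor p ε)
      (p / 2 * (ε + t) ^ ((p - 2) / 2 - 1) * (ε + (p - 1) * t)) t := by
  set c := (p - 2) / 2 with hc
  have hpow : HasDerivAt (fun t => (ε + t) ^ c) (c * (ε + t) ^ (c - 1)) t := by
    simpa using ((hasDerivAt_id t).const_add ε).rpow_const (p := c) (Or.inl hεt.ne')
  have hlin : HasDerivAt (fun t => (p - 1) * t - ε) (p - 1) t := by
    simpa using ((hasDerivAt_id t).const_mul (p - 1)).sub_const ε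
  have hsplit : (ε + t) ^ c = (ε + t) ^ (c - 1) * (ε + t) := by
    rw [← Real.rpow_add_one hεt.ne', sub_add_cancel]
  refine ((hlin.mul hpow).const_add p).congr_deriv ?_
  rw [hsplit, hc]
  ring

theorem gradientFactor_monotoneOn (hp : 1 ≤ p) (hε : 0 < ε) :
    MonotoneOn (gradientFactor p ε) (Ici 0) := by
  have hderiv : ∀ t ∈ Ici (0 : ℝ), HasDerivAt (gradientFactor p ε)
      (p / 2 * (ε + t) ^ ((p - 2) / 2 - 1) * (ε + (p - 1) * t)) t :=
    fun t (ht : 0 ≤ t) => hasDerivAt_gradientFactor p (by linarith)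
  refine monotoneOn_of_hasDerivWithinAt_nonneg (convex_Ici 0)
    (fun t ht => (hderiv t ht).continuousAt.continuousWithinAt)
    (fun t ht => (hderiv t (interior_subset ht)).hasDerivWithinAt) fun t ht => ?_
  rw [interior_Ici, mem_Ioi] at ht
  have hp1 : 0 ≤ (p - 1) * t := mul_nonneg (by linarith) ht.le
  have hpow : 0 ≤ (ε + t) ^ ((p - 2) / 2 - 1) := Real.rpow_nonneg (by linarith) _
  have hp2 : 0 ≤ p / 2 := by linarith
  positivity

theorem gradientFactor_zero (p : ℝ) (hε : 0 < ε) : gradientFactor p ε 0 = p - ε ^ (p / 2) := by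
  have hpow : ε ^ (p / 2) = ε * ε ^ ((p - 2) / 2) := by
    rw [show p / 2 = 1 + (p - 2) / 2 by ring, Real.rpow_add hε, Real.rpow_one]
  rw [gradientFactor, hpow]
  ring_nf

/-- Let `p > 1`, `ε > 0` and
`h t = p + ((p-1)t - ε) * (ε + t) ^ ((p-2)/2)`. Then `h` is non-decreasing on `[0,∞)`;
consequently `h t ≥ h 0 = p - ε ^ (p/2)` for all `t ≥ 0`, and if moreover
`ε < p ^ (2/p)` then `h t > 0` for all `t ≥ 0`. -/
theorem stmt_18 (p ε : ℝ) (hp : 1 < p) (hε : 0 < ε) :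
    MonotoneOn (fun t : ℝ => p + ((p - 1) * t - ε) * (ε + t) ^ ((p - 2) / 2)) (Set.Ici 0) ∧
    (p + ((p - 1) * 0 - ε) * (ε + 0) ^ ((p - 2) / 2) = p - ε ^ (p / 2)) ∧
    (∀ t ≥ (0:ℝ), p - ε ^ (p / 2) ≤ p + ((p - 1) * t - ε) * (ε + t) ^ ((p - 2) / 2)) ∧
    (ε < p ^ (2 / p) →
      ∀ t ≥ (0:ℝ), 0 < p + ((p - 1) * t - ε) * (ε + t) ^ ((p - 2) / 2)) := by
  have hmono := gradientFactor_monotoneOn hp.le hε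
  have hmin : ∀ t ≥ (0 : ℝ), p - ε ^ (p / 2) ≤ gradientFactor p ε t := fun t ht =>
    gradientFactor_zero p hε ▸ hmono self_mem_Ici ht ht
  refine ⟨hmono, gradientFactor_zero p hε, hmin, fun hsmall t ht => ?_⟩
  have hp0 : 0 < p / 2 := by linarith
  have hpow : ε ^ (p / 2) < p := by
    rwa [← Real.lt_rpow_inv_iff_of_pos hε.le (by linarith) hp0, inv_div]
  exact (sub_pos.mpr hpow).trans_le (hmin t ht)

end
end

section
/- Let f(t) = 1 + √t for t ≥ 0. Then: (i) the function t ↦ f(t)/t = (1 + √t)/t is non-increasing on (0, ∞); (ii) the function s ↦ e^s / f(e^s) = e^s / (1 + e^{s/2}) is convex on ℝ; (iii) setting F(t) = ∫₀^t f(τ) dτ = t + (2/3) t^{3/2}, the function t ↦ F(t)/f(t) is NOT convex on (0, ∞). (Hence f satisfies the hypotheses of the log-concavity theorem for p = 2 but fails hypothesis (2) of the main φ-concavity theorem.) -/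
/-!
(i) `(1 + √t)/t = t⁻¹ + (√t)⁻¹` is a sum of two non-increasing functions.
(ii) `eˢ/(1 + e^{s/2}) = g(e^{s/2})` with `g x = x²/(1 + x)`, a convex function that is
non-decreasing on `[0, ∞)`, composed with the convex function `s ↦ e^{s/2}`.
(iii) Substituting `t = u²`, `F(u²)/f(u²) = (u² + (2/3)u³)/(1 + u)`; at `u = 1, 5, 7` this is `5/6`, `325/18` and `833/24`,
and `325/18 > (5/6 + 833/24)/2` although `25` is the midpoint of `1` and `49`.
-/

open Set Real

lemma Real.rpow_three_halves {t : ℝ} (ht : 0 ≤ t) : t ^ ((3 : ℝ) / 2) = √t ^ 3 := by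
  rw [rpow_div_two_eq_sqrt 3 ht, ← rpow_natCast]
  norm_num

lemma one_add_sqrt_div_eq (t : ℝ) : (1 + √t) / t = t⁻¹ + (√t)⁻¹ := by
  rw [add_div, one_div, sqrt_div_self]

lemma antitoneOn_one_add_sqrt_div : AntitoneOn (fun t : ℝ => (1 + √t) / t) (Ioi 0) := by
  have hinv_sqrt : AntitoneOn (fun t : ℝ => (√t)⁻¹) (Ioi 0) :=
    inv_antitoneOn_Ioi.comp_MonotoneOn (fun _ _ _ _ h => sqrt_le_sqrt h)
      fun _ ht => sqrt_pos.2 ht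
  simpa only [one_add_sqrt_div_eq] using inv_antitoneOn_Ioi.add hinv_sqrt

lemma convexOn_sq_div_one_add : ConvexOn ℝ (Ioi (-1)) (fun x : ℝ => x ^ 2 / (1 + x)) := by
  refine ⟨convex_Ioi _, fun x hx y hy a b ha hb hab => ?_⟩
  have hx1 : 0 < 1 + x := by linarith [mem_Ioi.1 hx]
  have hy1 : 0 < 1 + y := by linarith [mem_Ioi.1 hy]
  have hxy1 : 0 < 1 + (a * x + b * y) := by
    have hmem := mem_Ioi.1 (convex_Ioi (-1 : ℝ) hx hy ha hb hab)
    simp only [smul_eq_mul] at hmem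
    linarith
  obtain rfl : b = 1 - a := by linarith
  simp only [smul_eq_mul]
  rw [show a * (x ^ 2 / (1 + x)) + (1 - a) * (y ^ 2 / (1 + y))
      = (a * x ^ 2 * (1 + y) + (1 - a) * y ^ 2 * (1 + x)) / ((1 + x) * (1 + y)) by field_simp,
    div_le_div_iff₀ hxy1 (by positivity)]
  nlinarith [mul_nonneg (mul_nonneg ha hb) (sq_nonneg (x - y)), mul_pos hx1 hy1]

lemma monotoneOn_sq_div_one_add : MonotoneOn (fun x : ℝ => x ^ 2 / (1 + x)) (Ici 0) := by
  intro x hx y hy hxy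
  have hx0 : 0 ≤ x := hx
  have hy0 : 0 ≤ y := hy
  rw [div_le_div_iff₀ (by linarith) (by linarith)]
  nlinarith [mul_nonneg (mul_nonneg hx0 hy0) (sub_nonneg.2 hxy),
    mul_nonneg (sub_nonneg.2 hxy) (add_nonneg hx0 hy0)]

lemma image_exp_half_univ : (fun s : ℝ => exp (s / 2)) '' univ = Ioi 0 := by
  have halve_surjective : Function.Surjective fun s : ℝ => s / 2 :=
    fun s => ⟨2 * s, by ring⟩
  rw [image_univ, ← range_exp]
  exact halve_surjective.range_comp exp

lemma convexOn_exp_half : ConvexOn ℝ univ (fun s : ℝ => exp (s / 2)) := by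
  simpa only [preimage_univ, Function.comp_def, LinearMap.lsmul_apply, smul_eq_mul,
    div_eq_inv_mul] using convexOn_exp.comp_linearMap (LinearMap.lsmul ℝ ℝ (2⁻¹ : ℝ))

lemma convexOn_exp_div_one_add_exp_half :
    ConvexOn ℝ univ (fun s : ℝ => exp s / (1 + exp (s / 2))) := by
  have hcomp : ConvexOn ℝ univ ((fun x : ℝ => x ^ 2 / (1 + x)) ∘ fun s : ℝ => exp (s / 2)) := by
    refine ConvexOn.comp ?_ convexOn_exp_half ?_ <;> rw [image_exp_half_univ]
    · exact convexOn_sq_div_one_add.subset (Ioi_subset_Ioi (by norm_num)) (convex_Ioi 0)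
    · exact monotoneOn_sq_div_one_add.mono Ioi_subset_Ici_self
  convert hcomp using 2 with s
  rw [Function.comp_apply, ← exp_nat_mul]
  ring_nf

lemma not_convexOn_primitive_div :
    ¬ ConvexOn ℝ (Ioi 0) (fun t : ℝ => (t + 2 / 3 * t ^ ((3 : ℝ) / 2)) / (1 + √t)) := by
  intro h
  have value_sq (u : ℝ) (hu : 0 ≤ u) : (u ^ 2 + 2 / 3 * (u ^ 2) ^ ((3 : ℝ) / 2)) / (1 + √(u ^ 2))
      = (u ^ 2 + 2 / 3 * u ^ 3) / (1 + u) := by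
    rw [rpow_three_halves (sq_nonneg u), sqrt_sq hu]
  have midpoint := h.2 (by norm_num : (1 : ℝ) ^ 2 ∈ Ioi 0) (by norm_num : (7 : ℝ) ^ 2 ∈ Ioi 0)
    (by norm_num : (0 : ℝ) ≤ 1 / 2) (by norm_num : (0 : ℝ) ≤ 1 / 2) (by norm_num)
  simp only [smul_eq_mul] at midpoint
  rw [show (1 / 2 : ℝ) * 1 ^ 2 + 1 / 2 * 7 ^ 2 = 5 ^ 2 by norm_num,
    value_sq 5 (by norm_num), value_sq 1 (by norm_num), value_sq 7 (by norm_num)] at midpoint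
  norm_num at midpoint

/-- For `f t = 1 + √t`:
(i) `t ↦ f t / t` is non-increasing on `(0,∞)`;
(ii) `s ↦ exp s / f (exp s) = exp s / (1 + exp (s/2))` is convex on `ℝ`;
(iii) with `F t = ∫ τ in 0..t, f τ = t + (2/3) t ^ (3/2)`, the function `t ↦ F t / f t`
is NOT convex on `(0,∞)`. -/
theorem stmt_19 :
    AntitoneOn (fun t : ℝ => (1 + Real.sqrt t) / t) (Set.Ioi 0) ∧
    ConvexOn ℝ Set.univ (fun s : ℝ => Real.exp s / (1 + Real.exp (s / 2))) ∧
    ¬ ConvexOn ℝ (Set.Ioi 0)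
        (fun t : ℝ => (t + 2 / 3 * t ^ ((3:ℝ) / 2)) / (1 + Real.sqrt t)) :=
  ⟨antitoneOn_one_add_sqrt_div, convexOn_exp_div_one_add_exp_half, not_convexOn_primitive_div⟩
end
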